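/- arXiv:1906.06595 — 4 statements merged into one kernel-verified Lean document; each statement's English description precedes it below -/
import Mathlib

section
/- Consider an (α, λ)-locally consistent RBM on observed variables X ∈ {±1}^n and latent variables Y ∈ {±1}^m with distribution Pr[X=x, Y=y] ∝ exp(x^T J y + h^T x + g^T y). If observed nodes u and v share a common latent neighbor k (i.e., |J_{uk}| ≥ α and |J_{vk}| ≥ α with J locally consistent), then Cov(X_u, X_v) ≥ α² · exp(−12λ). -/
noncomputable def pm (b : Bool) : ℝ := if b then 1 else -1

open Finset Real

/-- One-dimensional Ahlswede–Daykin base case. -/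
lemma ad1 {a0 a1 b0 b1 c0 c1 d0 d1 : ℝ}
    (ha0 : 0 ≤ a0) (ha1 : 0 ≤ a1) (hb0 : 0 ≤ b0) (hb1 : 0 ≤ b1)
    (hc0 : 0 ≤ c0) (hc1 : 0 ≤ c1) (hd0 : 0 ≤ d0) (hd1 : 0 ≤ d1)
    (h00 : a0 * b0 ≤ c0 * d0) (h11 : a1 * b1 ≤ c1 * d1)
    (h01 : a0 * b1 ≤ c1 * d0) (h10 : a1 * b0 ≤ c1 * d0) :
    (a0 + a1) * (b0 + b1) ≤ (c0 + c1) * (d0 + d1) := by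
  rcases eq_or_lt_of_le (mul_nonneg hc1 hd0) with hz | hz
  · -- c1 * d0 = 0
    have e01 : a0 * b1 = 0 := le_antisymm (h01.trans hz.symm.le) (mul_nonneg ha0 hb1)
    have e10 : a1 * b0 = 0 := le_antisymm (h10.trans hz.symm.le) (mul_nonneg ha1 hb0)
    nlinarith [mul_nonneg hc0 hd1, mul_nonneg hc1 hd0]
  · -- 0 < c1 * d0
    have key : (a0 + a1) * (b0 + b1) * (c1 * d0) ≤ (c0 + c1) * (d0 + d1) * (c1 * d0) := by
      have step1 : (c1 * d0 + a0 * b0) * (c1 * d0 + a1 * b1)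
          ≤ (c1 * d0 + c0 * d0) * (c1 * d0 + c1 * d1) :=
        mul_le_mul (by linarith) (by linarith)
          (by positivity) (by positivity)
      have step2 : (c1 * d0 + c0 * d0) * (c1 * d0 + c1 * d1)
          = (c0 + c1) * (d0 + d1) * (c1 * d0) := by ring
      nlinarith [mul_nonneg (sub_nonneg.2 h01) (sub_nonneg.2 h10)]
    exact le_of_mul_le_mul_right key hz

/-- Ahlswede–Daykin four functions theorem on the Boolean cube. -/
theorem adFour : ∀ (N : ℕ) (ι : Type) [Fintype ι] [DecidableEq ι], Fintype.card ι = N →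
    ∀ (f1 f2 f3 f4 : (ι → Bool) → ℝ),
    (∀ p, 0 ≤ f1 p) → (∀ p, 0 ≤ f2 p) → (∀ p, 0 ≤ f3 p) → (∀ p, 0 ≤ f4 p) →
    (∀ a b, f1 a * f2 b ≤ f3 (a ⊔ b) * f4 (a ⊓ b)) →
    (∑ a, f1 a) * (∑ b, f2 b) ≤ (∑ a, f3 a) * (∑ b, f4 b) := by
  intro N
  induction N with
  | zero =>
    intro ι _ _ hcard f1 f2 f3 f4 h1 h2 h3 h4 hyp
    haveI : IsEmpty ι := Fintype.card_eq_zero_iff.mp hcard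
    haveI : Subsingleton (ι → Bool) := ⟨fun x y => funext fun i => isEmptyElim i⟩
    have c : ι → Bool := fun _ => false
    rw [Fintype.sum_subsingleton f1 c, Fintype.sum_subsingleton f2 c,
      Fintype.sum_subsingleton f3 c, Fintype.sum_subsingleton f4 c]
    have := hyp c c
    rw [show (c ⊔ c) = c from by simp, show (c ⊓ c) = c from by simp] at this
    exact this
  | succ N ih =>
    intro ι _ _ hcard f1 f2 f4 f5 h1 h2 h3 h4 hyp
    obtain ⟨i0⟩ : Nonempty ι := Fintype.card_pos_iff.mp (by omega)
    set κ := { j : ι // j ≠ i0 } with hκ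
    haveI : Fintype κ := inferInstance
    have hcardκ : Fintype.card κ = N := by
      have := Fintype.card_subtype_compl (fun j : ι => j = i0)
      simp only [Fintype.card_subtype_eq] at this
      have h2 : Fintype.card κ = Fintype.card {j : ι // ¬ j = i0} := rfl
      omega
    let e := Equiv.funSplitAt i0 Bool
    have esup : ∀ (s t : Bool) (a b : κ → Bool),
        e.symm (s, a) ⊔ e.symm (t, b) = e.symm (s ⊔ t, a ⊔ b) := by
      intro s t a b
      funext j
      by_cases hj : j = i0 <;>
        simp [e, Equiv.funSplitAt, Equiv.piSplitAt, hj, Pi.sup_apply]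
    have einf : ∀ (s t : Bool) (a b : κ → Bool),
        e.symm (s, a) ⊓ e.symm (t, b) = e.symm (s ⊓ t, a ⊓ b) := by
      intro s t a b
      funext j
      by_cases hj : j = i0 <;>
        simp [e, Equiv.funSplitAt, Equiv.piSplitAt, hj, Pi.inf_apply]
    have hsum : ∀ f : (ι → Bool) → ℝ,
        (∑ a, f a) = ∑ r : κ → Bool, (f (e.symm (false, r)) + f (e.symm (true, r))) := by
      intro f
      rw [← Equiv.sum_comp e.symm f, Fintype.sum_prod_type]
      rw [Fintype.sum_bool]
      rw [← Finset.sum_add_distrib]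
      apply Finset.sum_congr rfl; intros; ring
    rw [hsum f1, hsum f2, hsum f4, hsum f5]
    apply ih κ hcardκ
    · intro p; exact add_nonneg (h1 _) (h1 _)
    · intro p; exact add_nonneg (h2 _) (h2 _)
    · intro p; exact add_nonneg (h3 _) (h3 _)
    · intro p; exact add_nonneg (h4 _) (h4 _)
    · intro a b
      have hff := hyp (e.symm (false, a)) (e.symm (false, b))
      have hft := hyp (e.symm (false, a)) (e.symm (true, b))
      have htf := hyp (e.symm (true, a)) (e.symm (false, b))
      have htt := hyp (e.symm (true, a)) (e.symm (true, b))
      rw [esup, einf] at hff hft htf htt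
      have hb1 : (false ⊔ false : Bool) = false := rfl
      have hb2 : (false ⊓ false : Bool) = false := rfl
      exact ad1 (h1 _) (h1 _) (h2 _) (h2 _) (h3 _) (h3 _) (h4 _) (h4 _)
        (by simpa using hff) (by simpa using htt) (by simpa using hft) (by simpa using htf)

namespace Stmt4Aux

lemma bool_sup (a b : Bool) : a ⊔ b = (a || b) := by cases a <;> cases b <;> rfl
lemma bool_inf (a b : Bool) : a ⊓ b = (a && b) := by cases a <;> cases b <;> rfl

lemma pm_sup_inf (a b : Bool) : pm (a ⊔ b) + pm (a ⊓ b) = pm a + pm b := by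
  cases a <;> cases b <;> simp [bool_sup, bool_inf, pm]

lemma pm_quad (a b a' b' : Bool) :
    pm a * pm b + pm a' * pm b' ≤ pm (a ⊔ a') * pm (b ⊔ b') + pm (a ⊓ a') * pm (b ⊓ b') := by
  cases a <;> cases b <;> cases a' <;> cases b' <;> norm_num [bool_sup, bool_inf, pm]

lemma pm_abs (a : Bool) : |pm a| = 1 := by cases a <;> simp [pm]

lemma pm_eq (a : Bool) : pm a = 2 * (if a then (1:ℝ) else 0) - 1 := by cases a <;> norm_num [pm]

variable {n m : ℕ}

def t3 (a b c : Bool) : Fin 3 → Bool := fun i => if i = 0 then a else if i = 1 then b else c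

@[simp] lemma t3_0 (a b c : Bool) : t3 a b c 0 = a := rfl
@[simp] lemma t3_1 (a b c : Bool) : t3 a b c 1 = b := rfl
@[simp] lemma t3_2 (a b c : Bool) : t3 a b c 2 = c := rfl

def E3 : Bool × Bool × Bool ≃ (Fin 3 → Bool) where
  toFun q := t3 q.1 q.2.1 q.2.2
  invFun s := (s 0, s 1, s 2)
  left_inv := by rintro ⟨a, b, c⟩; rfl
  right_inv := by intro s; funext i; fin_cases i <;> rfl

lemma sum3 (F : (Fin 3 → Bool) → ℝ) :
    (∑ s, F s) = F (t3 true true true) + F (t3 true true false) + F (t3 true false true)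
      + F (t3 true false false) + F (t3 false true true) + F (t3 false true false)
      + F (t3 false false true) + F (t3 false false false) := by
  rw [← Equiv.sum_comp E3 F]
  rw [Fintype.sum_prod_type]
  simp only [Fintype.sum_prod_type, Fintype.sum_bool]
  show F (t3 true true true) + F (t3 true true false) + (F (t3 true false true)
      + F (t3 true false false)) + (F (t3 false true true) + F (t3 false true false)
      + (F (t3 false false true) + F (t3 false false false))) = _
  ring

variable (u v : Fin n) (k : Fin m)

def upd (β : (Fin n ⊕ Fin m) → Bool) (s : Fin 3 → Bool) : (Fin n ⊕ Fin m) → Bool :=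
  Function.update (Function.update (Function.update β (Sum.inl u) (s 0)) (Sum.inl v) (s 1))
    (Sum.inr k) (s 2)

lemma upd_apply (β s x) : upd u v k β s x =
    if x = Sum.inr k then s 2 else if x = Sum.inl v then s 1 else
      if x = Sum.inl u then s 0 else β x := by
  simp [upd, Function.update_apply]

lemma upd_upd (β s t) : upd u v k (upd u v k β s) t = upd u v k β t := by
  funext x
  simp only [upd_apply]
  split_ifs <;> rfl

def spins (β : (Fin n ⊕ Fin m) → Bool) : Fin 3 → Bool :=
  t3 (β (Sum.inl u)) (β (Sum.inl v)) (β (Sum.inr k))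

lemma spins_upd (huv : u ≠ v) (β s) : spins u v k (upd u v k β s) = s := by
  funext i
  fin_cases i <;> simp [spins, upd_apply, huv] <;> rfl

lemma upd_spins (β) : upd u v k β (spins u v k β) = β := by
  funext x
  simp only [upd_apply, spins, t3_0, t3_1, t3_2]
  split_ifs with h1 h2 h3 <;> (first | rw [h1] | rw [h2] | rw [h3] | rfl)

lemma sum_upd (huv : u ≠ v) (f : ((Fin n ⊕ Fin m) → Bool) → ℝ) :
    ∑ β, ∑ s : Fin 3 → Bool, f (upd u v k β s) = 8 * ∑ p, f p := by
  let e : (((Fin n ⊕ Fin m) → Bool) × (Fin 3 → Bool)) ≃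
      (((Fin n ⊕ Fin m) → Bool) × (Fin 3 → Bool)) := {
    toFun := fun q => (upd u v k q.1 q.2, spins u v k q.1)
    invFun := fun q => (upd u v k q.1 q.2, spins u v k q.1)
    left_inv := by
      rintro ⟨β, s⟩
      simp [upd_upd, spins_upd u v k huv, upd_spins]
    right_inv := by
      rintro ⟨β, s⟩
      simp [upd_upd, spins_upd u v k huv, upd_spins] }
  have h1 := Equiv.sum_comp e (fun q => f q.1)
  simp only [Fintype.sum_prod_type] at h1
  have h2 : ∀ (β : (Fin n ⊕ Fin m) → Bool) (s : Fin 3 → Bool), f (e (β, s)).1 = f (upd u v k β s) := by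
    intro β s; simp only [e, Equiv.coe_fn_mk]
  simp only [h2] at h1
  rw [h1]
  rw [Finset.mul_sum]
  apply Finset.sum_congr rfl
  intro β _
  rw [Finset.sum_const]
  have : (Finset.univ : Finset (Fin 3 → Bool)).card = 8 := by
    simp [Finset.card_univ]
  rw [this]
  simp [nsmul_eq_mul]
  
lemma upd_sup (β γ s t) :
    upd u v k β s ⊔ upd u v k γ t = upd u v k (β ⊔ γ) (s ⊔ t) := by
  funext x
  simp only [Pi.sup_apply, upd_apply]
  split_ifs <;> rfl

lemma upd_inf (β γ s t) :
    upd u v k β s ⊓ upd u v k γ t = upd u v k (β ⊓ γ) (s ⊓ t) := by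
  funext x
  simp only [Pi.inf_apply, upd_apply]
  split_ifs <;> rfl


noncomputable def LW (J : Matrix (Fin n) (Fin m) ℝ) (h : Fin n → ℝ) (g : Fin m → ℝ)
    (p : (Fin n ⊕ Fin m) → Bool) : ℝ :=
  (∑ i, ∑ j, pm (p (Sum.inl i)) * J i j * pm (p (Sum.inr j)))
    + (∑ i, h i * pm (p (Sum.inl i))) + ∑ j, g j * pm (p (Sum.inr j))

noncomputable def Wt (J : Matrix (Fin n) (Fin m) ℝ) (h : Fin n → ℝ) (g : Fin m → ℝ)
    (p : (Fin n ⊕ Fin m) → Bool) : ℝ := Real.exp (LW J h g p)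

lemma Wt_pos (J : Matrix (Fin n) (Fin m) ℝ) (h : Fin n → ℝ) (g : Fin m → ℝ) (p : (Fin n ⊕ Fin m) → Bool) : 0 < Wt J h g p := Real.exp_pos _

lemma LW_supermod (J : Matrix (Fin n) (Fin m) ℝ) (h : Fin n → ℝ) (g : Fin m → ℝ) (hJ : ∀ i j, 0 ≤ J i j)
    (p q : (Fin n ⊕ Fin m) → Bool) :
    LW J h g p + LW J h g q ≤ LW J h g (p ⊔ q) + LW J h g (p ⊓ q) := by
  unfold LW
  have hlin1 : (∑ i, h i * pm ((p ⊔ q) (Sum.inl i))) + (∑ i, h i * pm ((p ⊓ q) (Sum.inl i)))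
      = (∑ i, h i * pm (p (Sum.inl i))) + (∑ i, h i * pm (q (Sum.inl i))) := by
    rw [← Finset.sum_add_distrib, ← Finset.sum_add_distrib]
    apply Finset.sum_congr rfl
    intro i _
    simp only [Pi.sup_apply, Pi.inf_apply]
    rw [← mul_add, pm_sup_inf, mul_add]
  have hlin2 : (∑ j, g j * pm ((p ⊔ q) (Sum.inr j))) + (∑ j, g j * pm ((p ⊓ q) (Sum.inr j)))
      = (∑ j, g j * pm (p (Sum.inr j))) + (∑ j, g j * pm (q (Sum.inr j))) := by
    rw [← Finset.sum_add_distrib, ← Finset.sum_add_distrib]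
    apply Finset.sum_congr rfl
    intro j _
    simp only [Pi.sup_apply, Pi.inf_apply]
    rw [← mul_add, pm_sup_inf, mul_add]
  have hquad : (∑ i, ∑ j, pm (p (Sum.inl i)) * J i j * pm (p (Sum.inr j)))
      + (∑ i, ∑ j, pm (q (Sum.inl i)) * J i j * pm (q (Sum.inr j)))
      ≤ (∑ i, ∑ j, pm ((p ⊔ q) (Sum.inl i)) * J i j * pm ((p ⊔ q) (Sum.inr j)))
      + (∑ i, ∑ j, pm ((p ⊓ q) (Sum.inl i)) * J i j * pm ((p ⊓ q) (Sum.inr j))) := by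
    rw [← Finset.sum_add_distrib, ← Finset.sum_add_distrib]
    apply Finset.sum_le_sum
    intro i _
    rw [← Finset.sum_add_distrib, ← Finset.sum_add_distrib]
    apply Finset.sum_le_sum
    intro j _
    simp only [Pi.sup_apply, Pi.inf_apply]
    nlinarith [mul_le_mul_of_nonneg_left
      (pm_quad (p (Sum.inl i)) (p (Sum.inr j)) (q (Sum.inl i)) (q (Sum.inr j))) (hJ i j)]
  linarith

lemma Wt_supermod (J : Matrix (Fin n) (Fin m) ℝ) (h : Fin n → ℝ) (g : Fin m → ℝ) (hJ : ∀ i j, 0 ≤ J i j)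
    (p q : (Fin n ⊕ Fin m) → Bool) :
    Wt J h g p * Wt J h g q ≤ Wt J h g (p ⊔ q) * Wt J h g (p ⊓ q) := by
  unfold Wt
  rw [← Real.exp_add, ← Real.exp_add]
  exact Real.exp_le_exp.mpr (LW_supermod J h g hJ p q)

def eU (u v : Fin n) : Finset (Fin n) := (Finset.univ.erase u).erase v
def eK (k : Fin m) : Finset (Fin m) := Finset.univ.erase k

noncomputable def Rb (J : Matrix (Fin n) (Fin m) ℝ) (h : Fin n → ℝ) (g : Fin m → ℝ) (u v : Fin n) (k : Fin m)
    (β : (Fin n ⊕ Fin m) → Bool) : ℝ :=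
  (∑ i ∈ eU u v, ∑ j ∈ eK k, pm (β (Sum.inl i)) * J i j * pm (β (Sum.inr j)))
    + (∑ i ∈ eU u v, h i * pm (β (Sum.inl i))) + ∑ j ∈ eK k, g j * pm (β (Sum.inr j))

noncomputable def aF (J : Matrix (Fin n) (Fin m) ℝ) (h : Fin n → ℝ) (u : Fin n) (k : Fin m)
    (β : (Fin n ⊕ Fin m) → Bool) : ℝ := h u + ∑ j ∈ eK k, J u j * pm (β (Sum.inr j))

noncomputable def cF (J : Matrix (Fin n) (Fin m) ℝ) (g : Fin m → ℝ) (u v : Fin n) (k : Fin m)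
    (β : (Fin n ⊕ Fin m) → Bool) : ℝ := g k + ∑ i ∈ eU u v, pm (β (Sum.inl i)) * J i k

lemma decomp (J : Matrix (Fin n) (Fin m) ℝ) (h : Fin n → ℝ) (g : Fin m → ℝ) (u v : Fin n) (k : Fin m) (huv : u ≠ v)
    (β : (Fin n ⊕ Fin m) → Bool) (s : Fin 3 → Bool) :
    LW J h g (upd u v k β s) = Rb J h g u v k β
      + aF J h u k β * pm (s 0) + aF J h v k β * pm (s 1) + cF J g u v k β * pm (s 2)
      + J u k * (pm (s 0) * pm (s 2)) + J v k * (pm (s 1) * pm (s 2)) := by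
  set q := upd u v k β s with hq
  have hqu : q (Sum.inl u) = s 0 := by simp [hq, upd_apply, huv]
  have hqv : q (Sum.inl v) = s 1 := by simp [hq, upd_apply]
  have hqk : q (Sum.inr k) = s 2 := by simp [hq, upd_apply]
  have hqi : ∀ i ∈ eU u v, q (Sum.inl i) = β (Sum.inl i) := by
    intro i hi
    simp only [eU, Finset.mem_erase] at hi
    simp [hq, upd_apply, hi.1, hi.2.1]
  have hqj : ∀ j ∈ eK k, q (Sum.inr j) = β (Sum.inr j) := by
    intro j hj
    simp only [eK, Finset.mem_erase] at hj
    simp [hq, upd_apply, hj.1]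
  have hvmem : v ∈ Finset.univ.erase u := Finset.mem_erase_of_ne_of_mem (Ne.symm huv) (Finset.mem_univ v)
  -- linear g-sum
  have S1 : (∑ j, g j * pm (q (Sum.inr j)))
      = g k * pm (s 2) + ∑ j ∈ eK k, g j * pm (β (Sum.inr j)) := by
    rw [← Finset.add_sum_erase _ _ (Finset.mem_univ k), hqk]
    congr 1
    exact Finset.sum_congr rfl (fun j hj => by rw [hqj j hj])
  -- linear h-sum
  have S2 : (∑ i, h i * pm (q (Sum.inl i)))
      = h u * pm (s 0) + h v * pm (s 1) + ∑ i ∈ eU u v, h i * pm (β (Sum.inl i)) := by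
    rw [← Finset.add_sum_erase _ _ (Finset.mem_univ u), hqu,
        ← Finset.add_sum_erase _ _ hvmem, hqv]
    rw [add_assoc]
    congr 2
    exact Finset.sum_congr rfl (fun i hi => by rw [hqi i hi])
  -- quadratic sum
  have S3 : (∑ i, ∑ j, pm (q (Sum.inl i)) * J i j * pm (q (Sum.inr j)))
      = (pm (s 0) * J u k * pm (s 2) + pm (s 1) * J v k * pm (s 2)
          + ∑ i ∈ eU u v, pm (β (Sum.inl i)) * J i k * pm (s 2))
        + ((∑ j ∈ eK k, pm (s 0) * J u j * pm (β (Sum.inr j)))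
          + (∑ j ∈ eK k, pm (s 1) * J v j * pm (β (Sum.inr j)))
          + ∑ i ∈ eU u v, ∑ j ∈ eK k, pm (β (Sum.inl i)) * J i j * pm (β (Sum.inr j))) := by
    have inner : ∀ i, (∑ j, pm (q (Sum.inl i)) * J i j * pm (q (Sum.inr j)))
        = pm (q (Sum.inl i)) * J i k * pm (s 2)
          + ∑ j ∈ eK k, pm (q (Sum.inl i)) * J i j * pm (q (Sum.inr j)) := by
      intro i
      rw [← Finset.add_sum_erase _ _ (Finset.mem_univ k), hqk]
      rfl
    simp only [inner]
    rw [Finset.sum_add_distrib]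
    congr 1
    · -- ∑ i, pm (q (inl i)) * J i k * pm (s 2)
      rw [← Finset.add_sum_erase _ _ (Finset.mem_univ u), hqu,
          ← Finset.add_sum_erase _ _ hvmem, hqv, add_assoc]
      congr 2
      exact Finset.sum_congr rfl (fun i hi => by rw [hqi i hi])
    · rw [← Finset.add_sum_erase _ _ (Finset.mem_univ u), hqu,
          ← Finset.add_sum_erase _ _ hvmem, hqv, add_assoc]
      congr 1
      · exact Finset.sum_congr rfl (fun j hj => by rw [hqj j hj])
      congr 1
      · exact Finset.sum_congr rfl (fun j hj => by rw [hqj j hj])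
      · apply Finset.sum_congr rfl
        intro i hi
        rw [hqi i hi]
        exact Finset.sum_congr rfl (fun j hj => by rw [hqj j hj])
  show LW J h g q = _
  unfold LW
  rw [S1, S2, S3]
  unfold Rb aF cF
  have hA : (∑ j ∈ eK k, pm (s 0) * J u j * pm (β (Sum.inr j)))
      = (∑ j ∈ eK k, J u j * pm (β (Sum.inr j))) * pm (s 0) := by
    rw [Finset.sum_mul]
    exact Finset.sum_congr rfl (fun _ _ => by ring)
  have hB : (∑ j ∈ eK k, pm (s 1) * J v j * pm (β (Sum.inr j)))
      = (∑ j ∈ eK k, J v j * pm (β (Sum.inr j))) * pm (s 1) := by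
    rw [Finset.sum_mul]
    exact Finset.sum_congr rfl (fun _ _ => by ring)
  have hC : (∑ i ∈ eU u v, pm (β (Sum.inl i)) * J i k * pm (s 2))
      = (∑ i ∈ eU u v, pm (β (Sum.inl i)) * J i k) * pm (s 2) := by
    rw [Finset.sum_mul]
  rw [hA, hB, hC]
  ring

end Stmt4Aux

namespace Stmt4Aux

noncomputable def ew (R A B C Ju Jv : ℝ) (e0 e1 e2 : Bool) : ℝ :=
  Real.exp (R + A * pm e0 + B * pm e1 + C * pm e2 + Ju * (pm e0 * pm e2) + Jv * (pm e1 * pm e2))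

lemma ew_pos (R A B C Ju Jv : ℝ) (e0 e1 e2 : Bool) : 0 < ew R A B C Ju Jv e0 e1 e2 :=
  Real.exp_pos _

lemma key1 {R A B C Ju Jv lam : ℝ} (hJu : 0 ≤ Ju) (hJv : 0 ≤ Jv)
    (hA : |A| ≤ lam - Ju) (hB : |B| ≤ lam - Jv) (hC : |C| ≤ lam - Ju - Jv) :
    (∑ s : Fin 3 → Bool, ew R A B C Ju Jv (s 0) (s 1) (s 2))
      ≤ 8 * Real.exp (3 * lam) * Real.exp R := by
  obtain ⟨hA1, hA2⟩ := abs_le.mp hA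
  obtain ⟨hB1, hB2⟩ := abs_le.mp hB
  obtain ⟨hC1, hC2⟩ := abs_le.mp hC
  have hbound : ∀ t : ℝ, t ≤ 3 * lam + R → Real.exp t ≤ Real.exp (3 * lam) * Real.exp R := by
    intro t ht
    rw [← Real.exp_add]
    exact Real.exp_le_exp.mpr ht
  rw [sum3 (fun s => ew R A B C Ju Jv (s 0) (s 1) (s 2))]
  simp only [t3_0, t3_1, t3_2, ew]
  norm_num [pm]
  have e1 := hbound (R + A + B + C + Ju + Jv) (by linarith)
  have e2 := hbound (R + A + B + -C + -Ju + -Jv) (by linarith)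
  have e3 := hbound (R + A + -B + C + Ju + -Jv) (by linarith)
  have e4 := hbound (R + A + -B + -C + -Ju + Jv) (by linarith)
  have e5 := hbound (R + -A + B + C + -Ju + Jv) (by linarith)
  have e6 := hbound (R + -A + B + -C + Ju + -Jv) (by linarith)
  have e7 := hbound (R + -A + -B + C + -Ju + -Jv) (by linarith)
  have e8 := hbound (R + -A + -B + -C + Ju + Jv) (by linarith)
  linarith [e1, e2, e3, e4, e5, e6, e7, e8]

lemma key2 {R A B C Ju Jv α : ℝ} (hα : 0 < α) (hu : α ≤ Ju) (hv : α ≤ Jv) :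
    64 * α ^ 2 * Real.exp R ^ 2 ≤
      (∑ s : Fin 3 → Bool, pm (s 0) * pm (s 1) * ew R A B C Ju Jv (s 0) (s 1) (s 2))
        * (∑ s : Fin 3 → Bool, ew R A B C Ju Jv (s 0) (s 1) (s 2))
      - (∑ s : Fin 3 → Bool, pm (s 0) * ew R A B C Ju Jv (s 0) (s 1) (s 2))
        * (∑ s : Fin 3 → Bool, pm (s 1) * ew R A B C Ju Jv (s 0) (s 1) (s 2)) := by
  rw [sum3 (fun s => pm (s 0) * pm (s 1) * ew R A B C Ju Jv (s 0) (s 1) (s 2)),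
    sum3 (fun s => ew R A B C Ju Jv (s 0) (s 1) (s 2)),
    sum3 (fun s => pm (s 0) * ew R A B C Ju Jv (s 0) (s 1) (s 2)),
    sum3 (fun s => pm (s 1) * ew R A B C Ju Jv (s 0) (s 1) (s 2))]
  simp only [t3_0, t3_1, t3_2, ew]
  norm_num [pm]
  have b1 : 4 * Ju ≤ Real.exp (2 * Ju) - Real.exp (-(2 * Ju)) := by
    have h2 : 2 * Ju < Real.sinh (2 * Ju) := Real.self_lt_sinh_iff.mpr (by linarith)
    rw [Real.sinh_eq] at h2
    linarith
  have b2 : 4 * Jv ≤ Real.exp (2 * Jv) - Real.exp (-(2 * Jv)) := by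
    have h2 : 2 * Jv < Real.sinh (2 * Jv) := Real.self_lt_sinh_iff.mpr (by linarith)
    rw [Real.sinh_eq] at h2
    linarith
  simp only [Real.exp_add, Real.exp_neg]
  have hp : (0:ℝ) < Real.exp Ju := Real.exp_pos _
  have hq : (0:ℝ) < Real.exp Jv := Real.exp_pos _
  have hx : (0:ℝ) < Real.exp A := Real.exp_pos _
  have hy : (0:ℝ) < Real.exp B := Real.exp_pos _
  have hw : (0:ℝ) < Real.exp C := Real.exp_pos _
  have hρ : (0:ℝ) < Real.exp R := Real.exp_pos _
  have c1 : 4 * α ≤ Real.exp Ju ^ 2 - (Real.exp Ju ^ 2)⁻¹ := by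
    have h1 : Real.exp (2 * Ju) = Real.exp Ju ^ 2 := by rw [two_mul, Real.exp_add, sq]
    have h2 : Real.exp (-(2 * Ju)) = (Real.exp Ju ^ 2)⁻¹ := by rw [Real.exp_neg, h1]
    rw [h1, h2] at b1
    linarith
  have c2 : 4 * α ≤ Real.exp Jv ^ 2 - (Real.exp Jv ^ 2)⁻¹ := by
    have h1 : Real.exp (2 * Jv) = Real.exp Jv ^ 2 := by rw [two_mul, Real.exp_add, sq]
    have h2 : Real.exp (-(2 * Jv)) = (Real.exp Jv ^ 2)⁻¹ := by rw [Real.exp_neg, h1]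
    rw [h1, h2] at b2
    linarith
  have cpos1 : (0:ℝ) < 4 * α := by linarith
  have cc : (4 * α) * (4 * α) ≤ (Real.exp Ju ^ 2 - (Real.exp Ju ^ 2)⁻¹)
      * (Real.exp Jv ^ 2 - (Real.exp Jv ^ 2)⁻¹) :=
    mul_le_mul c1 c2 cpos1.le (le_trans cpos1.le c1)
  have final : 64 * α ^ 2 * Real.exp R ^ 2 ≤ 4 * Real.exp R ^ 2 *
      ((Real.exp Ju ^ 2 - (Real.exp Ju ^ 2)⁻¹) * (Real.exp Jv ^ 2 - (Real.exp Jv ^ 2)⁻¹)) := by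
    nlinarith [mul_le_mul_of_nonneg_left cc (by positivity : (0:ℝ) ≤ 4 * Real.exp R ^ 2)]
  refine le_trans final (le_of_eq ?_)
  field_simp
  ring
end Stmt4Aux

namespace Stmt4Aux

section Spin
variable {n m : ℕ} (J : Matrix (Fin n) (Fin m) ℝ) (h : Fin n → ℝ) (g : Fin m → ℝ)
  (u v : Fin n) (k : Fin m)

noncomputable def zS (β : (Fin n ⊕ Fin m) → Bool) : ℝ :=
  ∑ s : Fin 3 → Bool, Wt J h g (upd u v k β s)
noncomputable def uS (β : (Fin n ⊕ Fin m) → Bool) : ℝ :=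
  ∑ s : Fin 3 → Bool, pm (s 0) * Wt J h g (upd u v k β s)
noncomputable def vS (β : (Fin n ⊕ Fin m) → Bool) : ℝ :=
  ∑ s : Fin 3 → Bool, pm (s 1) * Wt J h g (upd u v k β s)
noncomputable def cS (β : (Fin n ⊕ Fin m) → Bool) : ℝ :=
  ∑ s : Fin 3 → Bool, pm (s 0) * pm (s 1) * Wt J h g (upd u v k β s)
noncomputable def uP (β : (Fin n ⊕ Fin m) → Bool) : ℝ :=
  ∑ s : Fin 3 → Bool, (if s 0 then (1:ℝ) else 0) * Wt J h g (upd u v k β s)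
noncomputable def vP (β : (Fin n ⊕ Fin m) → Bool) : ℝ :=
  ∑ s : Fin 3 → Bool, (if s 1 then (1:ℝ) else 0) * Wt J h g (upd u v k β s)

lemma zS_pos (β) : 0 < zS J h g u v k β :=
  Finset.sum_pos (fun s _ => Wt_pos J h g _) Finset.univ_nonempty

lemma uP_nonneg (β) : 0 ≤ uP J h g u v k β := by
  apply Finset.sum_nonneg
  intro s _
  apply mul_nonneg _ (Wt_pos J h g _).le
  split <;> norm_num

lemma vP_nonneg (β) : 0 ≤ vP J h g u v k β := by
  apply Finset.sum_nonneg
  intro s _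
  apply mul_nonneg _ (Wt_pos J h g _).le
  split <;> norm_num

lemma uS_eq (β) : uS J h g u v k β = 2 * uP J h g u v k β - zS J h g u v k β := by
  unfold uS uP zS
  rw [show ∀ S : Finset (Fin 3 → Bool), (∑ s ∈ S, pm (s 0) * Wt J h g (upd u v k β s))
      = ∑ s ∈ S, (2 * ((if s 0 then (1:ℝ) else 0) * Wt J h g (upd u v k β s))
        - Wt J h g (upd u v k β s)) from fun S => Finset.sum_congr rfl
        (fun s _ => by rw [pm_eq]; ring)]
  rw [Finset.sum_sub_distrib, ← Finset.mul_sum]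

lemma vS_eq (β) : vS J h g u v k β = 2 * vP J h g u v k β - zS J h g u v k β := by
  unfold vS vP zS
  rw [show ∀ S : Finset (Fin 3 → Bool), (∑ s ∈ S, pm (s 1) * Wt J h g (upd u v k β s))
      = ∑ s ∈ S, (2 * ((if s 1 then (1:ℝ) else 0) * Wt J h g (upd u v k β s))
        - Wt J h g (upd u v k β s)) from fun S => Finset.sum_congr rfl
        (fun s _ => by rw [pm_eq]; ring)]
  rw [Finset.sum_sub_distrib, ← Finset.mul_sum]

lemma zS_supermod (hJ : ∀ i j, 0 ≤ J i j) (β γ) :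
    zS J h g u v k β * zS J h g u v k γ
      ≤ zS J h g u v k (β ⊔ γ) * zS J h g u v k (β ⊓ γ) := by
  apply adFour (Fintype.card (Fin 3)) (Fin 3) rfl
    (fun s => Wt J h g (upd u v k β s)) (fun s => Wt J h g (upd u v k γ s))
    (fun s => Wt J h g (upd u v k (β ⊔ γ) s)) (fun s => Wt J h g (upd u v k (β ⊓ γ) s))
    (fun s => (Wt_pos J h g _).le) (fun s => (Wt_pos J h g _).le)
    (fun s => (Wt_pos J h g _).le) (fun s => (Wt_pos J h g _).le)
  intro s t
  rw [← upd_sup, ← upd_inf]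
  exact Wt_supermod J h g hJ _ _

lemma uP_mono (hJ : ∀ i j, 0 ≤ J i j) {β γ} (hle : β ≤ γ) :
    uP J h g u v k β * zS J h g u v k γ ≤ uP J h g u v k γ * zS J h g u v k β := by
  apply adFour (Fintype.card (Fin 3)) (Fin 3) rfl
    (fun s => (if s 0 then (1:ℝ) else 0) * Wt J h g (upd u v k β s))
    (fun s => Wt J h g (upd u v k γ s))
    (fun s => (if s 0 then (1:ℝ) else 0) * Wt J h g (upd u v k γ s))
    (fun s => Wt J h g (upd u v k β s))
    (fun s => mul_nonneg (by split <;> norm_num) (Wt_pos J h g _).le)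
    (fun s => (Wt_pos J h g _).le)
    (fun s => mul_nonneg (by split <;> norm_num) (Wt_pos J h g _).le)
    (fun s => (Wt_pos J h g _).le)
  intro s t
  have e1 : upd u v k β s ⊔ upd u v k γ t = upd u v k γ (s ⊔ t) := by
    rw [upd_sup, sup_eq_right.mpr hle]
  have e2 : upd u v k β s ⊓ upd u v k γ t = upd u v k β (s ⊓ t) := by
    rw [upd_inf, inf_eq_left.mpr hle]
  by_cases hs : s 0
  · have hst : (s ⊔ t) 0 = true := by
      have : (s ⊔ t) 0 = s 0 ⊔ t 0 := rfl
      rw [this, hs, bool_sup]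
      simp
    rw [hs, hst]
    simp only [if_pos]
    rw [one_mul, one_mul, ← e1, ← e2]
    exact Wt_supermod J h g hJ _ _
  · have hs' : s 0 = false := by simp at hs; exact hs
    rw [hs']
    simp only [Bool.false_eq_true, if_false, zero_mul]
    apply mul_nonneg (mul_nonneg (by split <;> norm_num) (Wt_pos J h g _).le)
      (Wt_pos J h g _).le

lemma vP_mono (hJ : ∀ i j, 0 ≤ J i j) {β γ} (hle : β ≤ γ) :
    vP J h g u v k β * zS J h g u v k γ ≤ vP J h g u v k γ * zS J h g u v k β := by
  apply adFour (Fintype.card (Fin 3)) (Fin 3) rfl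
    (fun s => (if s 1 then (1:ℝ) else 0) * Wt J h g (upd u v k β s))
    (fun s => Wt J h g (upd u v k γ s))
    (fun s => (if s 1 then (1:ℝ) else 0) * Wt J h g (upd u v k γ s))
    (fun s => Wt J h g (upd u v k β s))
    (fun s => mul_nonneg (by split <;> norm_num) (Wt_pos J h g _).le)
    (fun s => (Wt_pos J h g _).le)
    (fun s => mul_nonneg (by split <;> norm_num) (Wt_pos J h g _).le)
    (fun s => (Wt_pos J h g _).le)
  intro s t
  have e1 : upd u v k β s ⊔ upd u v k γ t = upd u v k γ (s ⊔ t) := by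
    rw [upd_sup, sup_eq_right.mpr hle]
  have e2 : upd u v k β s ⊓ upd u v k γ t = upd u v k β (s ⊓ t) := by
    rw [upd_inf, inf_eq_left.mpr hle]
  by_cases hs : s 1
  · have hst : (s ⊔ t) 1 = true := by
      have : (s ⊔ t) 1 = s 1 ⊔ t 1 := rfl
      rw [this, hs, bool_sup]
      simp
    rw [hs, hst]
    simp only [if_pos]
    rw [one_mul, one_mul, ← e1, ← e2]
    exact Wt_supermod J h g hJ _ _
  · have hs' : s 1 = false := by simp at hs; exact hs
    rw [hs']
    simp only [Bool.false_eq_true, if_false, zero_mul]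
    apply mul_nonneg (mul_nonneg (by split <;> norm_num) (Wt_pos J h g _).le)
      (Wt_pos J h g _).le

lemma fkg (hJ : ∀ i j, 0 ≤ J i j) :
    (∑ β, uP J h g u v k β) * (∑ β, vP J h g u v k β)
      ≤ (∑ β, uP J h g u v k β * vP J h g u v k β / zS J h g u v k β)
        * (∑ β, zS J h g u v k β) := by
  have zpos := zS_pos J h g u v k
  apply adFour (Fintype.card (Fin n ⊕ Fin m)) (Fin n ⊕ Fin m) rfl
    (uP J h g u v k) (vP J h g u v k)
    (fun β => uP J h g u v k β * vP J h g u v k β / zS J h g u v k β)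
    (zS J h g u v k)
    (uP_nonneg J h g u v k) (vP_nonneg J h g u v k)
    (fun β => div_nonneg (mul_nonneg (uP_nonneg J h g u v k β) (vP_nonneg J h g u v k β))
      (zpos β).le)
    (fun β => (zpos β).le)
  intro β γ
  rw [div_mul_eq_mul_div, le_div_iff₀ (zpos (β ⊔ γ))]
  have m1 := uP_mono J h g u v k hJ (le_sup_left : β ≤ β ⊔ γ)
  have m2 := vP_mono J h g u v k hJ (le_sup_right : γ ≤ β ⊔ γ)
  have m3 := zS_supermod J h g u v k hJ β γ
  have chain : (uP J h g u v k β * vP J h g u v k γ * zS J h g u v k (β ⊔ γ)) * zS J h g u v k (β ⊔ γ)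
      ≤ (uP J h g u v k (β ⊔ γ) * vP J h g u v k (β ⊔ γ) * zS J h g u v k (β ⊓ γ)) * zS J h g u v k (β ⊔ γ) := by
    calc (uP J h g u v k β * vP J h g u v k γ * zS J h g u v k (β ⊔ γ)) * zS J h g u v k (β ⊔ γ)
        = (uP J h g u v k β * zS J h g u v k (β ⊔ γ)) * (vP J h g u v k γ * zS J h g u v k (β ⊔ γ)) := by ring
      _ ≤ (uP J h g u v k (β ⊔ γ) * zS J h g u v k β) * (vP J h g u v k (β ⊔ γ) * zS J h g u v k γ) := by
          apply mul_le_mul m1 m2 (mul_nonneg (vP_nonneg J h g u v k γ) (zpos _).le)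
          exact mul_nonneg (uP_nonneg J h g u v k _) (zpos _).le
      _ = (uP J h g u v k (β ⊔ γ) * vP J h g u v k (β ⊔ γ)) * (zS J h g u v k β * zS J h g u v k γ) := by ring
      _ ≤ (uP J h g u v k (β ⊔ γ) * vP J h g u v k (β ⊔ γ)) * (zS J h g u v k (β ⊔ γ) * zS J h g u v k (β ⊓ γ)) := by
          apply mul_le_mul_of_nonneg_left m3
          exact mul_nonneg (uP_nonneg J h g u v k _) (vP_nonneg J h g u v k _)
      _ = (uP J h g u v k (β ⊔ γ) * vP J h g u v k (β ⊔ γ) * zS J h g u v k (β ⊓ γ)) * zS J h g u v k (β ⊔ γ) := by ring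
  exact le_of_mul_le_mul_right chain (zpos (β ⊔ γ))
end Spin
end Stmt4Aux

namespace Stmt4Aux
section Bounds
variable {n m : ℕ} (J : Matrix (Fin n) (Fin m) ℝ) (h : Fin n → ℝ) (g : Fin m → ℝ)
  (u v : Fin n) (k : Fin m) {lam α : ℝ}

lemma aF_abs (hJ : ∀ i j, 0 ≤ J i j) (hrowu : (∑ j, |J u j|) + |h u| ≤ lam) (β) :
    |aF J h u k β| ≤ lam - J u k := by
  have h1 : |∑ j ∈ eK k, J u j * pm (β (Sum.inr j))| ≤ ∑ j ∈ eK k, J u j := by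
    refine le_trans (Finset.abs_sum_le_sum_abs _ _) (le_of_eq ?_)
    apply Finset.sum_congr rfl
    intro j _
    rw [abs_mul, pm_abs, mul_one, abs_of_nonneg (hJ u j)]
  have h2 : J u k + ∑ j ∈ eK k, J u j = ∑ j, J u j :=
    Finset.add_sum_erase _ _ (Finset.mem_univ k)
  have h3 : (∑ j, |J u j|) = ∑ j, J u j :=
    Finset.sum_congr rfl (fun j _ => abs_of_nonneg (hJ u j))
  have h4 : |aF J h u k β| ≤ |h u| + ∑ j ∈ eK k, J u j := by
    refine le_trans (abs_add_le _ _) ?_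
    linarith
  rw [h3] at hrowu
  linarith

lemma cF_abs (hJ : ∀ i j, 0 ≤ J i j) (huv : u ≠ v)
    (hcolk : (∑ i, |J i k|) + |g k| ≤ lam) (β) :
    |cF J g u v k β| ≤ lam - J u k - J v k := by
  have h1 : |∑ i ∈ eU u v, pm (β (Sum.inl i)) * J i k| ≤ ∑ i ∈ eU u v, J i k := by
    refine le_trans (Finset.abs_sum_le_sum_abs _ _) (le_of_eq ?_)
    apply Finset.sum_congr rfl
    intro i _
    rw [abs_mul, pm_abs, one_mul, abs_of_nonneg (hJ i k)]
  have hvmem : v ∈ Finset.univ.erase u :=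
    Finset.mem_erase_of_ne_of_mem (Ne.symm huv) (Finset.mem_univ v)
  have h2 : J u k + ∑ i ∈ Finset.univ.erase u, J i k = ∑ i, J i k :=
    Finset.add_sum_erase _ (fun i => J i k) (Finset.mem_univ u)
  have h2' : J v k + ∑ i ∈ eU u v, J i k = ∑ i ∈ Finset.univ.erase u, J i k :=
    Finset.add_sum_erase _ (fun i => J i k) hvmem
  have h3 : (∑ i, |J i k|) = ∑ i, J i k :=
    Finset.sum_congr rfl (fun i _ => abs_of_nonneg (hJ i k))
  have h4 : |cF J g u v k β| ≤ |g k| + ∑ i ∈ eU u v, J i k := by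
    refine le_trans (abs_add_le _ _) ?_
    linarith
  rw [h3] at hcolk
  linarith

lemma perbeta (huv : u ≠ v) (hJ : ∀ i j, 0 ≤ J i j) (hα : 0 < α)
    (hu : α ≤ J u k) (hv : α ≤ J v k)
    (hrowu : (∑ j, |J u j|) + |h u| ≤ lam) (hrowv : (∑ j, |J v j|) + |h v| ≤ lam)
    (hcolk : (∑ i, |J i k|) + |g k| ≤ lam) (β) :
    zS J h g u v k β ≤ 8 * Real.exp (3 * lam) * Real.exp (Rb J h g u v k β)
    ∧ 64 * α ^ 2 * Real.exp (Rb J h g u v k β) ^ 2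
        ≤ cS J h g u v k β * zS J h g u v k β - uS J h g u v k β * vS J h g u v k β := by
  have hW : ∀ s : Fin 3 → Bool, Wt J h g (upd u v k β s)
      = ew (Rb J h g u v k β) (aF J h u k β) (aF J h v k β) (cF J g u v k β)
          (J u k) (J v k) (s 0) (s 1) (s 2) := by
    intro s
    rw [Wt, decomp J h g u v k huv]
    rfl
  constructor
  · unfold zS
    simp only [hW]
    exact key1 (le_trans hα.le hu) (le_trans hα.le hv)
      (aF_abs J h u k hJ hrowu β) (aF_abs J h v k hJ hrowv β) (cF_abs J g u v k hJ huv hcolk β)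
  · unfold cS zS uS vS
    simp only [hW]
    exact key2 hα hu hv

end Bounds
end Stmt4Aux

namespace Stmt4Aux
section Assemble
variable {n m : ℕ} (J : Matrix (Fin n) (Fin m) ℝ) (h : Fin n → ℝ) (g : Fin m → ℝ)
  (u v : Fin n) (k : Fin m) {lam α : ℝ}

lemma upd_at_u (huv : u ≠ v) (β) (s : Fin 3 → Bool) :
    upd u v k β s (Sum.inl u) = s 0 := by simp [upd_apply, huv]

lemma upd_at_v (β) (s : Fin 3 → Bool) : upd u v k β s (Sum.inl v) = s 1 := by
  simp [upd_apply]

lemma sum_zS (huv : u ≠ v) : ∑ β, zS J h g u v k β = 8 * ∑ p, Wt J h g p := by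
  unfold zS
  exact sum_upd u v k huv (Wt J h g)

lemma sum_uS (huv : u ≠ v) :
    ∑ β, uS J h g u v k β = 8 * ∑ p, pm (p (Sum.inl u)) * Wt J h g p := by
  unfold uS
  rw [show ∀ F : ((Fin n ⊕ Fin m) → Bool) → ℝ, (∑ β, F β) = ∑ β, F β from fun _ => rfl]
  calc ∑ β, ∑ s : Fin 3 → Bool, pm (s 0) * Wt J h g (upd u v k β s)
      = ∑ β, ∑ s : Fin 3 → Bool,
          (fun p => pm (p (Sum.inl u)) * Wt J h g p) (upd u v k β s) := by
        refine Finset.sum_congr rfl fun β _ => Finset.sum_congr rfl fun s _ => ?_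
        simp only
        rw [upd_at_u u v k huv]
    _ = 8 * ∑ p, pm (p (Sum.inl u)) * Wt J h g p :=
        sum_upd u v k huv (fun p => pm (p (Sum.inl u)) * Wt J h g p)

lemma sum_vS (huv : u ≠ v) :
    ∑ β, vS J h g u v k β = 8 * ∑ p, pm (p (Sum.inl v)) * Wt J h g p := by
  unfold vS
  calc ∑ β, ∑ s : Fin 3 → Bool, pm (s 1) * Wt J h g (upd u v k β s)
      = ∑ β, ∑ s : Fin 3 → Bool,
          (fun p => pm (p (Sum.inl v)) * Wt J h g p) (upd u v k β s) := by
        refine Finset.sum_congr rfl fun β _ => Finset.sum_congr rfl fun s _ => ?_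
        simp only
        rw [upd_at_v]
    _ = 8 * ∑ p, pm (p (Sum.inl v)) * Wt J h g p :=
        sum_upd u v k huv (fun p => pm (p (Sum.inl v)) * Wt J h g p)

lemma sum_cS (huv : u ≠ v) :
    ∑ β, cS J h g u v k β
      = 8 * ∑ p, pm (p (Sum.inl u)) * pm (p (Sum.inl v)) * Wt J h g p := by
  unfold cS
  calc ∑ β, ∑ s : Fin 3 → Bool, pm (s 0) * pm (s 1) * Wt J h g (upd u v k β s)
      = ∑ β, ∑ s : Fin 3 → Bool,
          (fun p => pm (p (Sum.inl u)) * pm (p (Sum.inl v)) * Wt J h g p) (upd u v k β s) := by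
        refine Finset.sum_congr rfl fun β _ => Finset.sum_congr rfl fun s _ => ?_
        simp only
        rw [upd_at_u u v k huv, upd_at_v]
    _ = 8 * ∑ p, pm (p (Sum.inl u)) * pm (p (Sum.inl v)) * Wt J h g p :=
        sum_upd u v k huv (fun p => pm (p (Sum.inl u)) * pm (p (Sum.inl v)) * Wt J h g p)

set_option maxHeartbeats 2000000 in
lemma mainPos (hα : 0 < α) (hJ : ∀ i j, 0 ≤ J i j)
    (hrow : ∀ i, (∑ j, |J i j|) + |h i| ≤ lam)
    (hcol : ∀ j, (∑ i, |J i j|) + |g j| ≤ lam)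
    (huv : u ≠ v) (hu : α ≤ J u k) (hv : α ≤ J v k) :
    α ^ 2 * Real.exp (-12 * lam) * (∑ p, Wt J h g p) ^ 2 ≤
      (∑ p, pm (p (Sum.inl u)) * pm (p (Sum.inl v)) * Wt J h g p) * (∑ p, Wt J h g p)
      - (∑ p, pm (p (Sum.inl u)) * Wt J h g p) * (∑ p, pm (p (Sum.inl v)) * Wt J h g p) := by
  have hlam : 0 ≤ lam := by
    have h1 : |J u k| ≤ ∑ j, |J u j| :=
      Finset.single_le_sum (fun j _ => abs_nonneg (J u j)) (Finset.mem_univ k)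
    have h2 := hrow u
    have h3 : α ≤ |J u k| := by rw [abs_of_nonneg (hJ u k)]; exact hu
    have := abs_nonneg (h u)
    linarith
  have zpos := zS_pos J h g u v k
  -- per-β bound in divided form
  have perb2 : ∀ β, α ^ 2 * Real.exp (-6 * lam) * zS J h g u v k β
      ≤ cS J h g u v k β - uS J h g u v k β * vS J h g u v k β / zS J h g u v k β := by
    intro β
    obtain ⟨pb1, pb2⟩ := perbeta J h g u v k huv hJ hα hu hv (hrow u) (hrow v) (hcol k) β
    have hρ : 0 < Real.exp (Rb J h g u v k β) := Real.exp_pos _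
    have hsq : (zS J h g u v k β) ^ 2 * Real.exp (-6 * lam)
        ≤ 64 * Real.exp (Rb J h g u v k β) ^ 2 := by
      have hz0 : 0 ≤ zS J h g u v k β := (zpos β).le
      have hsq1 : (zS J h g u v k β) ^ 2 ≤ (8 * Real.exp (3 * lam) * Real.exp (Rb J h g u v k β)) ^ 2 := by
        apply pow_le_pow_left₀ hz0 pb1
      have hexp : Real.exp (3 * lam) ^ 2 * Real.exp (-6 * lam) = 1 := by
        rw [sq, ← Real.exp_add, ← Real.exp_add,
          show 3 * lam + 3 * lam + -6 * lam = 0 by ring, Real.exp_zero]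
      have he6 : 0 < Real.exp (-6 * lam) := Real.exp_pos _
      calc (zS J h g u v k β) ^ 2 * Real.exp (-6 * lam)
          ≤ (8 * Real.exp (3 * lam) * Real.exp (Rb J h g u v k β)) ^ 2 * Real.exp (-6 * lam) := by
            exact mul_le_mul_of_nonneg_right hsq1 he6.le
        _ = 64 * Real.exp (Rb J h g u v k β) ^ 2 * (Real.exp (3 * lam) ^ 2 * Real.exp (-6 * lam)) := by ring
        _ = 64 * Real.exp (Rb J h g u v k β) ^ 2 := by rw [hexp, mul_one]
    have hmul : (α ^ 2 * Real.exp (-6 * lam) * zS J h g u v k β) * zS J h g u v k β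
        ≤ (cS J h g u v k β - uS J h g u v k β * vS J h g u v k β / zS J h g u v k β)
            * zS J h g u v k β := by
      have hdiv : (cS J h g u v k β - uS J h g u v k β * vS J h g u v k β / zS J h g u v k β)
          * zS J h g u v k β
          = cS J h g u v k β * zS J h g u v k β - uS J h g u v k β * vS J h g u v k β := by
        have hzne : zS J h g u v k β ≠ 0 := (zpos β).ne'
        field_simp
      rw [hdiv]
      have e1 : (α ^ 2 * Real.exp (-6 * lam) * zS J h g u v k β) * zS J h g u v k β
          = α ^ 2 * ((zS J h g u v k β) ^ 2 * Real.exp (-6 * lam)) := by ring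
      rw [e1]
      calc α ^ 2 * ((zS J h g u v k β) ^ 2 * Real.exp (-6 * lam))
          ≤ α ^ 2 * (64 * Real.exp (Rb J h g u v k β) ^ 2) :=
            mul_le_mul_of_nonneg_left hsq (by positivity)
        _ = 64 * α ^ 2 * Real.exp (Rb J h g u v k β) ^ 2 := by ring
        _ ≤ _ := pb2
    exact le_of_mul_le_mul_right hmul (zpos β)
  -- summed form
  have sumineq : α ^ 2 * Real.exp (-6 * lam) * (∑ β, zS J h g u v k β)
      ≤ ∑ β, (cS J h g u v k β - uS J h g u v k β * vS J h g u v k β / zS J h g u v k β) := by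
    rw [Finset.mul_sum]
    exact Finset.sum_le_sum (fun β _ => perb2 β)
  -- FKG part
  have hfkg := fkg J h g u v k hJ
  -- pointwise identity for uS*vS/zS
  have hpt : ∀ β, uS J h g u v k β * vS J h g u v k β / zS J h g u v k β
      = 4 * (uP J h g u v k β * vP J h g u v k β / zS J h g u v k β)
        - 2 * uP J h g u v k β - 2 * vP J h g u v k β + zS J h g u v k β := by
    intro β
    have hzne : zS J h g u v k β ≠ 0 := (zpos β).ne'
    rw [uS_eq, vS_eq]
    field_simp
    ring
  -- big sums notation
  set a := ∑ β, uP J h g u v k β with ha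
  set b := ∑ β, vP J h g u v k β with hb
  set c := ∑ β, uP J h g u v k β * vP J h g u v k β / zS J h g u v k β with hc
  set z := ∑ β, zS J h g u v k β with hz
  have huSsum : ∑ β, uS J h g u v k β = 2 * a - z := by
    rw [ha, hz, Finset.mul_sum, ← Finset.sum_sub_distrib]
    exact Finset.sum_congr rfl (fun β _ => uS_eq J h g u v k β)
  have hvSsum : ∑ β, vS J h g u v k β = 2 * b - z := by
    rw [hb, hz, Finset.mul_sum, ← Finset.sum_sub_distrib]
    exact Finset.sum_congr rfl (fun β _ => vS_eq J h g u v k β)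
  have hdivsum : ∑ β, uS J h g u v k β * vS J h g u v k β / zS J h g u v k β
      = 4 * c - 2 * a - 2 * b + z := by
    rw [hc, ha, hb, hz, Finset.mul_sum, Finset.mul_sum, Finset.mul_sum]
    rw [← Finset.sum_sub_distrib, ← Finset.sum_sub_distrib, ← Finset.sum_add_distrib]
    exact Finset.sum_congr rfl (fun β _ => hpt β)
  have hsplit : ∑ β, (cS J h g u v k β - uS J h g u v k β * vS J h g u v k β / zS J h g u v k β)
      = (∑ β, cS J h g u v k β) - (4 * c - 2 * a - 2 * b + z) := by
    rw [← hdivsum, Finset.sum_sub_distrib]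
  -- combine
  have hz0 : 0 ≤ z := by
    rw [hz]; exact Finset.sum_nonneg (fun β _ => (zpos β).le)
  have main6 : α ^ 2 * Real.exp (-6 * lam) * z ^ 2
      ≤ (∑ β, cS J h g u v k β) * z - (∑ β, uS J h g u v k β) * (∑ β, vS J h g u v k β) := by
    have step1 : α ^ 2 * Real.exp (-6 * lam) * z * z
        ≤ ((∑ β, cS J h g u v k β) - (4 * c - 2 * a - 2 * b + z)) * z := by
      rw [← hsplit]
      exact mul_le_mul_of_nonneg_right sumineq hz0
    rw [huSsum, hvSsum]
    nlinarith [hfkg, step1]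
  rw [sum_zS J h g u v k huv, sum_uS J h g u v k huv, sum_vS J h g u v k huv,
    sum_cS J h g u v k huv] at *
  have hexp12 : Real.exp (-12 * lam) ≤ Real.exp (-6 * lam) :=
    Real.exp_le_exp.mpr (by linarith)
  rw [hz] at main6
  have hh : α ^ 2 * Real.exp (-12 * lam) * (∑ p, Wt J h g p) ^ 2
      ≤ α ^ 2 * Real.exp (-6 * lam) * (∑ p, Wt J h g p) ^ 2 :=
    mul_le_mul_of_nonneg_right (mul_le_mul_of_nonneg_left hexp12 (sq_nonneg α))
      (sq_nonneg _)
  nlinarith [main6, hh]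

end Assemble
end Stmt4Aux

namespace Stmt4Aux
lemma pm_not (b : Bool) : pm (!b) = -pm b := by cases b <;> simp [pm]
end Stmt4Aux

theorem stmt4 (n m : ℕ) (J : Matrix (Fin n) (Fin m) ℝ) (h : Fin n → ℝ) (g : Fin m → ℝ)
    (α lam : ℝ) (hα : 0 < α)
    (hlc : ∀ j, (∀ i, 0 ≤ J i j) ∨ (∀ i, J i j ≤ 0))
    (hmin : ∀ i j, J i j ≠ 0 → α ≤ |J i j|)
    (hrow : ∀ i, (∑ j, |J i j|) + |h i| ≤ lam)
    (hcol : ∀ j, (∑ i, |J i j|) + |g j| ≤ lam)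
    (u v : Fin n) (huv : u ≠ v) (k : Fin m)
    (hu : α ≤ |J u k|) (hv : α ≤ |J v k|) :
    let w : (Fin n → Bool) → (Fin m → Bool) → ℝ := fun x y =>
      Real.exp ((∑ i, ∑ j, pm (x i) * J i j * pm (y j))
        + (∑ i, h i * pm (x i)) + ∑ j, g j * pm (y j))
    let Z := ∑ x, ∑ y, w x y
    let E : ((Fin n → Bool) → ℝ) → ℝ := fun φ => (∑ x, ∑ y, φ x * w x y) / Z
    α ^ 2 * Real.exp (-12 * lam) ≤
      E (fun x => pm (x u) * pm (x v)) - E (fun x => pm (x u)) * E (fun x => pm (x v)) := by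
  classical
  intro w Z E
  -- gauged data
  set J2 : Matrix (Fin n) (Fin m) ℝ := fun i j => |J i j| with hJ2
  set g' : Fin m → ℝ := fun j => if (∀ i, 0 ≤ J i j) then g j else -g j with hg'
  set flip : (Fin m → Bool) → (Fin m → Bool) :=
    fun y j => if (∀ i, 0 ≤ J i j) then y j else !(y j) with hflipdef
  have flip_invol : ∀ y, flip (flip y) = y := by
    intro y
    funext j
    by_cases hc : ∀ i, 0 ≤ J i j <;> simp [hflipdef, hc]
  let eflip : (Fin m → Bool) ≃ (Fin m → Bool) :=
    { toFun := flip, invFun := flip, left_inv := flip_invol, right_inv := flip_invol }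
  set w2 : (Fin n → Bool) → (Fin m → Bool) → ℝ := fun x y =>
    Real.exp ((∑ i, ∑ j, pm (x i) * J2 i j * pm (y j))
      + (∑ i, h i * pm (x i)) + ∑ j, g' j * pm (y j)) with hw2
  have hflip : ∀ x y, w x y = w2 x (flip y) := by
    intro x y
    show Real.exp _ = Real.exp _
    congr 1
    have t1 : (∑ i, ∑ j, pm (x i) * J i j * pm (y j))
        = ∑ i, ∑ j, pm (x i) * J2 i j * pm (flip y j) := by
      refine Finset.sum_congr rfl fun i _ => Finset.sum_congr rfl fun j _ => ?_
      by_cases hc : ∀ i', 0 ≤ J i' j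
      · simp only [hJ2, hflipdef, if_pos hc, abs_of_nonneg (hc i)]
      · have hneg : ∀ i', J i' j ≤ 0 := (hlc j).resolve_left hc
        simp only [hJ2, hflipdef, if_neg hc, abs_of_nonpos (hneg i), Stmt4Aux.pm_not]
        ring
    have t2 : (∑ j, g j * pm (y j)) = ∑ j, g' j * pm (flip y j) := by
      refine Finset.sum_congr rfl fun j _ => ?_
      by_cases hc : ∀ i', 0 ≤ J i' j
      · simp only [hg', hflipdef, if_pos hc]
      · simp only [hg', hflipdef, if_neg hc, Stmt4Aux.pm_not]
        ring
    rw [t1, t2]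
  -- transfer to sums over the sum type
  have key : ∀ φ : (Fin n → Bool) → ℝ,
      (∑ x, ∑ y, φ x * w x y) = ∑ p : (Fin n ⊕ Fin m) → Bool,
        φ (fun i => p (Sum.inl i)) * Stmt4Aux.Wt J2 h g' p := by
    intro φ
    have step1 : ∀ x, (∑ y, φ x * w x y) = ∑ y, φ x * w2 x y := by
      intro x
      calc (∑ y, φ x * w x y) = ∑ y, (fun y' => φ x * w2 x y') (eflip y) := by
            refine Finset.sum_congr rfl fun y _ => ?_
            simp only [eflip, Equiv.coe_fn_mk]
            rw [hflip]
        _ = ∑ y, φ x * w2 x y := Equiv.sum_comp eflip (fun y' => φ x * w2 x y')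
    rw [Finset.sum_congr rfl (fun x _ => step1 x)]
    have step2 := Equiv.sum_comp (Equiv.sumArrowEquivProdArrow (Fin n) (Fin m) Bool)
      (fun q : (Fin n → Bool) × (Fin m → Bool) => φ q.1 * w2 q.1 q.2)
    rw [Fintype.sum_prod_type] at step2
    rw [← step2]
    rfl
  -- apply the positive-J main lemma
  have hJ2nn : ∀ i j, 0 ≤ J2 i j := fun i j => abs_nonneg _
  have hrow2 : ∀ i, (∑ j, |J2 i j|) + |h i| ≤ lam := by
    intro i
    have : (∑ j, |J2 i j|) = ∑ j, |J i j| :=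
      Finset.sum_congr rfl fun j _ => abs_abs (J i j)
    rw [this]
    exact hrow i
  have hcol2 : ∀ j, (∑ i, |J2 i j|) + |g' j| ≤ lam := by
    intro j
    have e1 : (∑ i, |J2 i j|) = ∑ i, |J i j| :=
      Finset.sum_congr rfl fun i _ => abs_abs (J i j)
    have e2 : |g' j| = |g j| := by
      by_cases hc : ∀ i, 0 ≤ J i j <;> simp [hg', hc]
    rw [e1, e2]
    exact hcol j
  have main := Stmt4Aux.mainPos J2 h g' u v k hα hJ2nn hrow2 hcol2 huv hu hv
  -- rewrite the E's
  have hZ : Z = ∑ p : (Fin n ⊕ Fin m) → Bool, Stmt4Aux.Wt J2 h g' p := by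
    have : Z = ∑ x, ∑ y, (fun _ : Fin n → Bool => (1:ℝ)) x * w x y := by
      simp only [one_mul]
      rfl
    rw [this, key]
    simp only [one_mul]
  have hC : (∑ x, ∑ y, (fun x => pm (x u) * pm (x v)) x * w x y)
      = ∑ p : (Fin n ⊕ Fin m) → Bool,
          pm (p (Sum.inl u)) * pm (p (Sum.inl v)) * Stmt4Aux.Wt J2 h g' p :=
    key (fun x => pm (x u) * pm (x v))
  have hA : (∑ x, ∑ y, (fun x => pm (x u)) x * w x y)
      = ∑ p : (Fin n ⊕ Fin m) → Bool, pm (p (Sum.inl u)) * Stmt4Aux.Wt J2 h g' p :=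
    key (fun x => pm (x u))
  have hB : (∑ x, ∑ y, (fun x => pm (x v)) x * w x y)
      = ∑ p : (Fin n ⊕ Fin m) → Bool, pm (p (Sum.inl v)) * Stmt4Aux.Wt J2 h g' p :=
    key (fun x => pm (x v))
  have hZpos : 0 < ∑ p : (Fin n ⊕ Fin m) → Bool, Stmt4Aux.Wt J2 h g' p :=
    Finset.sum_pos (fun p _ => Stmt4Aux.Wt_pos J2 h g' p) Finset.univ_nonempty
  show (∑ x, ∑ y, (fun x => pm (x u) * pm (x v)) x * w x y) / Z
      - ((∑ x, ∑ y, (fun x => pm (x u)) x * w x y) / Z)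
        * ((∑ x, ∑ y, (fun x => pm (x v)) x * w x y) / Z) ≥ _
  rw [ge_iff_le, hZ, hC, hA, hB]
  set Zp := ∑ p : (Fin n ⊕ Fin m) → Bool, Stmt4Aux.Wt J2 h g' p
  set Cp := ∑ p : (Fin n ⊕ Fin m) → Bool,
    pm (p (Sum.inl u)) * pm (p (Sum.inl v)) * Stmt4Aux.Wt J2 h g' p
  set Ap := ∑ p : (Fin n ⊕ Fin m) → Bool, pm (p (Sum.inl u)) * Stmt4Aux.Wt J2 h g' p
  set Bp := ∑ p : (Fin n ⊕ Fin m) → Bool, pm (p (Sum.inl v)) * Stmt4Aux.Wt J2 h g' p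
  have hfrac : Cp / Zp - Ap / Zp * (Bp / Zp) = (Cp * Zp - Ap * Bp) / Zp ^ 2 := by
    field_simp
  rw [hfrac, le_div_iff₀ (by positivity)]
  exact main
end

section
/- In a locally consistent RBM (all columns of J have consistent sign) with arbitrary external fields h, g, the covariance Cov(X_u, X_v) of any two observed variables that share a common latent neighbor is nonnegative. -/
section PM

lemma pm_one_nonneg (b : Bool) : 0 ≤ pm b + 1 := by cases b <;> norm_num [pm]

lemma pm_mono : Monotone pm := by
  intro a b hab
  cases a <;> cases b <;> norm_num [pm] <;> exact absurd hab (by decide)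

lemma pm_lin (a b : Bool) : pm (a ⊔ b) + pm (a ⊓ b) = pm a + pm b := by
  cases a <;> cases b <;> norm_num [pm]

lemma pm_pair (a b c d : Bool) (r : ℝ) (hr : 0 ≤ r) :
    pm a * r * pm c + pm b * r * pm d
      ≤ pm (a ⊔ b) * r * pm (c ⊔ d) + pm (a ⊓ b) * r * pm (c ⊓ d) := by
  cases a <;> cases b <;> cases c <;> cases d <;> simp [pm] <;> nlinarith

end PM

section Core

variable {n m : ℕ}

noncomputable def W (J : Matrix (Fin n) (Fin m) ℝ) (h : Fin n → ℝ) (g : Fin m → ℝ)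
    (x : Fin n → Bool) (y : Fin m → Bool) : ℝ :=
  Real.exp ((∑ i, ∑ j, pm (x i) * J i j * pm (y j))
    + (∑ i, h i * pm (x i)) + ∑ j, g j * pm (y j))

lemma W_supermod (J : Matrix (Fin n) (Fin m) ℝ) (h : Fin n → ℝ) (g : Fin m → ℝ)
    (hJ : ∀ i j, 0 ≤ J i j) (p q : (Fin n → Bool) × (Fin m → Bool)) :
    W J h g p.1 p.2 * W J h g q.1 q.2 ≤
      W J h g (p ⊓ q).1 (p ⊓ q).2 * W J h g (p ⊔ q).1 (p ⊔ q).2 := by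
  unfold W
  rw [← Real.exp_add, ← Real.exp_add]
  apply Real.exp_le_exp.2
  have hsup1 : ∀ i, (p ⊔ q).1 i = p.1 i ⊔ q.1 i := fun i => rfl
  have hsup2 : ∀ j, (p ⊔ q).2 j = p.2 j ⊔ q.2 j := fun j => rfl
  have hinf1 : ∀ i, (p ⊓ q).1 i = p.1 i ⊓ q.1 i := fun i => rfl
  have hinf2 : ∀ j, (p ⊓ q).2 j = p.2 j ⊓ q.2 j := fun j => rfl
  simp only [hsup1, hsup2, hinf1, hinf2]
  have hpair : (∑ i, ∑ j, pm (p.1 i) * J i j * pm (p.2 j))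
      + (∑ i, ∑ j, pm (q.1 i) * J i j * pm (q.2 j))
      ≤ (∑ i, ∑ j, pm (p.1 i ⊔ q.1 i) * J i j * pm (p.2 j ⊔ q.2 j))
      + (∑ i, ∑ j, pm (p.1 i ⊓ q.1 i) * J i j * pm (p.2 j ⊓ q.2 j)) := by
    rw [← Finset.sum_add_distrib, ← Finset.sum_add_distrib]
    refine Finset.sum_le_sum fun i _ => ?_
    rw [← Finset.sum_add_distrib, ← Finset.sum_add_distrib]
    exact Finset.sum_le_sum fun j _ => pm_pair _ _ _ _ _ (hJ i j)
  have hlin1 : (∑ i, h i * pm (p.1 i)) + (∑ i, h i * pm (q.1 i))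
      = (∑ i, h i * pm (p.1 i ⊔ q.1 i)) + (∑ i, h i * pm (p.1 i ⊓ q.1 i)) := by
    rw [← Finset.sum_add_distrib, ← Finset.sum_add_distrib]
    refine Finset.sum_congr rfl fun i _ => ?_
    rw [← mul_add, ← mul_add, pm_lin]
  have hlin2 : (∑ j, g j * pm (p.2 j)) + (∑ j, g j * pm (q.2 j))
      = (∑ j, g j * pm (p.2 j ⊔ q.2 j)) + (∑ j, g j * pm (p.2 j ⊓ q.2 j)) := by
    rw [← Finset.sum_add_distrib, ← Finset.sum_add_distrib]
    refine Finset.sum_congr rfl fun j _ => ?_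
    rw [← mul_add, ← mul_add, pm_lin]
  linarith

lemma core (J : Matrix (Fin n) (Fin m) ℝ) (h : Fin n → ℝ) (g : Fin m → ℝ)
    (hJ : ∀ i j, 0 ≤ J i j) (u v : Fin n) :
    (∑ x, ∑ y, pm (x u) * W J h g x y) * (∑ x, ∑ y, pm (x v) * W J h g x y)
      ≤ (∑ x, ∑ y, pm (x u) * pm (x v) * W J h g x y) * (∑ x, ∑ y, W J h g x y) := by
  set L := (Fin n → Bool) × (Fin m → Bool)
  have hfkg := fkg (μ := fun p : L => W J h g p.1 p.2)
    (f := fun p : L => pm (p.1 u) + 1) (g := fun p : L => pm (p.1 v) + 1)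
    (fun p => (Real.exp_pos _).le) (fun p => pm_one_nonneg _) (fun p => pm_one_nonneg _)
    (fun p q hpq => by
      have := pm_mono (hpq.1 u); simpa using add_le_add_right this 1)
    (fun p q hpq => by
      have := pm_mono (hpq.1 v); simpa using add_le_add_right this 1)
    (W_supermod J h g hJ)
  set A := ∑ x, ∑ y, pm (x u) * pm (x v) * W J h g x y with hA
  set B := ∑ x, ∑ y, pm (x u) * W J h g x y with hB
  set C := ∑ x, ∑ y, pm (x v) * W J h g x y with hC
  set Z := ∑ x, ∑ y, W J h g x y with hZ
  have e1 : (∑ p : L, W J h g p.1 p.2 * (pm (p.1 u) + 1)) = B + Z := by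
    rw [Fintype.sum_prod_type, hB, hZ, ← Finset.sum_add_distrib]
    refine Finset.sum_congr rfl fun x _ => ?_
    rw [← Finset.sum_add_distrib]
    exact Finset.sum_congr rfl fun y _ => by ring
  have e2 : (∑ p : L, W J h g p.1 p.2 * (pm (p.1 v) + 1)) = C + Z := by
    rw [Fintype.sum_prod_type, hC, hZ, ← Finset.sum_add_distrib]
    refine Finset.sum_congr rfl fun x _ => ?_
    rw [← Finset.sum_add_distrib]
    exact Finset.sum_congr rfl fun y _ => by ring
  have e3 : (∑ p : L, W J h g p.1 p.2 * ((pm (p.1 u) + 1) * (pm (p.1 v) + 1)))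
      = A + B + C + Z := by
    rw [Fintype.sum_prod_type, hA, hB, hC, hZ, ← Finset.sum_add_distrib,
      ← Finset.sum_add_distrib, ← Finset.sum_add_distrib]
    refine Finset.sum_congr rfl fun x _ => ?_
    rw [← Finset.sum_add_distrib, ← Finset.sum_add_distrib, ← Finset.sum_add_distrib]
    exact Finset.sum_congr rfl fun y _ => by ring
  have e4 : (∑ p : L, W J h g p.1 p.2) = Z := by
    rw [Fintype.sum_prod_type, hZ]
  beta_reduce at hfkg
  rw [e1, e2, e3, e4] at hfkg
  nlinarith [hfkg]

end Core

section Main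

lemma pm_xor (a b : Bool) : pm (xor a b) = (if a then (-1:ℝ) else 1) * pm b := by
  cases a <;> cases b <;> norm_num [pm]

theorem stmt5 (n m : ℕ) (J : Matrix (Fin n) (Fin m) ℝ) (h : Fin n → ℝ) (g : Fin m → ℝ)
    (hlc : ∀ j, (∀ i, 0 ≤ J i j) ∨ (∀ i, J i j ≤ 0))
    (u v : Fin n) (huv : u ≠ v)
    (hshare : ∃ k, J u k ≠ 0 ∧ J v k ≠ 0) :
    let w : (Fin n → Bool) → (Fin m → Bool) → ℝ := fun x y =>
      Real.exp ((∑ i, ∑ j, pm (x i) * J i j * pm (y j))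
        + (∑ i, h i * pm (x i)) + ∑ j, g j * pm (y j))
    let Z := ∑ x, ∑ y, w x y
    let E : ((Fin n → Bool) → ℝ) → ℝ := fun φ => (∑ x, ∑ y, φ x * w x y) / Z
    0 ≤ E (fun x => pm (x u) * pm (x v)) - E (fun x => pm (x u)) * E (fun x => pm (x v)) := by
  classical
  intro w Z E
  set c : Fin m → Bool := fun j => if (∀ i, 0 ≤ J i j) then false else true with hc
  set s : Fin m → ℝ := fun j => if c j then -1 else 1 with hs
  set J' : Matrix (Fin n) (Fin m) ℝ := fun i j => s j * J i j with hJ'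
  set g' : Fin m → ℝ := fun j => s j * g j with hg'
  have hsq : ∀ j, s j * s j = 1 := by
    intro j; by_cases hcj : c j <;> simp [hs, hcj]
  have hJ'pos : ∀ i j, 0 ≤ J' i j := by
    intro i j
    by_cases hcase : ∀ i, 0 ≤ J i j
    · have : c j = false := by simp [hc, hcase]
      simpa [hJ', hs, this] using hcase i
    · have h2 : ∀ i, J i j ≤ 0 := (hlc j).resolve_left hcase
      have : c j = true := by simp [hc, hcase]
      simp only [hJ', hs, this, if_true]
      nlinarith [h2 i]
  have hpmx : ∀ j b, pm (xor (c j) b) = s j * pm b := by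
    intro j b
    rw [pm_xor, hs]
  -- the flip equivalence
  have hflip : ∀ x : Fin n → Bool, (∑ y, W J h g x y) = ∑ y, W J' h g' x y := by
    intro x
    have einv : ∀ j, Function.Involutive (fun b => xor (c j) b) := by
      intro j b; cases (c j) <;> cases b <;> rfl
    set e : (Fin m → Bool) ≃ (Fin m → Bool) :=
      Equiv.piCongrRight (fun j => (einv j).toPerm _) with he
    have key : ∀ y, W J h g x y = W J' h g' x (e y) := by
      intro y
      have hey : ∀ j, e y j = xor (c j) (y j) := fun j => rfl
      unfold W
      congr 1
      congr 1
      · congr 1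
        refine Finset.sum_congr rfl fun i _ => Finset.sum_congr rfl fun j _ => ?_
        rw [hey, hpmx, hJ']
        linear_combination (-(pm (x i) * J i j * pm (y j))) * hsq j
      · refine Finset.sum_congr rfl fun j _ => ?_
        rw [hey, hpmx, hg']
        linear_combination (-(g j * pm (y j))) * hsq j
    calc (∑ y, W J h g x y) = ∑ y, W J' h g' x (e y) := Finset.sum_congr rfl fun y _ => key y
      _ = ∑ y, W J' h g' x y := Equiv.sum_comp e _
  -- translate everything to primed weights
  have hwW : w = W J h g := rfl
  set A := ∑ x, ∑ y, pm (x u) * pm (x v) * W J' h g' x y with hA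
  set B := ∑ x, ∑ y, pm (x u) * W J' h g' x y with hB
  set C := ∑ x, ∑ y, pm (x v) * W J' h g' x y with hC
  set Z' := ∑ x, ∑ y, W J' h g' x y with hZ'
  have hZeq : Z = Z' := by
    rw [show Z = ∑ x, ∑ y, W J h g x y from rfl, hZ']
    exact Finset.sum_congr rfl fun x _ => hflip x
  have hAeq : (∑ x, ∑ y, (pm (x u) * pm (x v)) * w x y) = A := by
    rw [hwW, hA]
    refine Finset.sum_congr rfl fun x _ => ?_
    rw [← Finset.mul_sum, ← Finset.mul_sum, hflip x]
  have hBeq : (∑ x, ∑ y, pm (x u) * w x y) = B := by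
    rw [hwW, hB]
    refine Finset.sum_congr rfl fun x _ => ?_
    rw [← Finset.mul_sum, ← Finset.mul_sum, hflip x]
  have hCeq : (∑ x, ∑ y, pm (x v) * w x y) = C := by
    rw [hwW, hC]
    refine Finset.sum_congr rfl fun x _ => ?_
    rw [← Finset.mul_sum, ← Finset.mul_sum, hflip x]
  have hZpos : 0 < Z' := by
    rw [hZ']
    exact Finset.sum_pos (fun x _ => Finset.sum_pos (fun y _ => Real.exp_pos _)
      Finset.univ_nonempty) Finset.univ_nonempty
  have hcore : B * C ≤ A * Z' := by
    have := core J' h g' (fun i j => hJ'pos i j) u v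
    rw [← hA, ← hB, ← hC, ← hZ'] at this
    exact this
  have key2 : B / Z' * (C / Z') ≤ A / Z' := by
    rw [div_mul_div_comm, show A / Z' = A * Z' / (Z' * Z') by
      rw [mul_div_mul_right _ _ hZpos.ne']]
    exact (div_le_div_iff_of_pos_right (mul_pos hZpos hZpos)).2 hcore
  show 0 ≤ E (fun x => pm (x u) * pm (x v)) - E (fun x => pm (x u)) * E (fun x => pm (x v))
  have hE1 : E (fun x => pm (x u) * pm (x v)) = A / Z' := by
    show (∑ x, ∑ y, (pm (x u) * pm (x v)) * w x y) / Z = A / Z'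
    rw [hAeq, hZeq]
  have hE2 : E (fun x => pm (x u)) = B / Z' := by
    show (∑ x, ∑ y, pm (x u) * w x y) / Z = B / Z'
    rw [hBeq, hZeq]
  have hE3 : E (fun x => pm (x v)) = C / Z' := by
    show (∑ x, ∑ y, pm (x v) * w x y) / Z = C / Z'
    rw [hCeq, hZeq]
  rw [hE1, hE2, hE3]
  linarith

end Main
end

section
/- For binary random variables X_u, X_v ∈ {±1} and any conditioning random variable X_S taking finitely many values, the average conditional covariance satisfies E_{x_S}[Cov(X_u, X_v | X_S = x_S)] ≤ √(2 I(X_u; X_v | X_S)), where I denotes conditional mutual information in nats. -/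
set_option maxHeartbeats 1000000

lemma log_ge_aux (t : ℝ) (ht : 0 < t) : 1 - 1/t ≤ Real.log t := by
  have h := Real.log_le_sub_one_of_pos (x := 1/t) (by positivity)
  rw [one_div, Real.log_inv] at h
  simp only [one_div]
  linarith

lemma h_deriv (x : ℝ) (hx : 0 < x) :
    HasDerivAt (fun t => (t+1)*Real.log t - 2*(t-1)) (Real.log x + (x+1)/x - 2) x := by
  have h1 : HasDerivAt (fun t : ℝ => (t+1)*Real.log t)
      (1 * Real.log x + (x+1) * x⁻¹) x :=
    (((hasDerivAt_id x).add_const 1)).mul (Real.hasDerivAt_log (ne_of_gt hx))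
  have h2 : HasDerivAt (fun t : ℝ => 2*(t-1)) (2*1) x :=
    ((hasDerivAt_id x).sub_const 1).const_mul 2
  have := h1.sub h2
  exact this.congr_deriv (by field_simp)

lemma g_deriv (x : ℝ) (hx : 0 < x) :
    HasDerivAt (fun t => (2*t+4)*(t*Real.log t - t + 1) - 3*(t-1)^2)
      (4*((x+1)*Real.log x - 2*(x-1))) x := by
  have hu : HasDerivAt (fun t : ℝ => 2*t+4) 2 x := by
    simpa using ((hasDerivAt_id x).const_mul (2:ℝ)).add_const 4
  have hv : HasDerivAt (fun t : ℝ => t*Real.log t - t + 1) ((Real.log x + 1) - 1) x :=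
    ((Real.hasDerivAt_mul_log (ne_of_gt hx)).sub (hasDerivAt_id x)).add_const 1
  have hsq : HasDerivAt (fun t : ℝ => 3*(t-1)^2) (3*(2*(x-1))) x := by
    have := (((hasDerivAt_id x).sub_const 1).pow 2)
    simpa using this.const_mul (3:ℝ)
  have := (hu.mul hv).sub hsq
  exact this.congr_deriv (by ring)

open Real in
lemma hmono_aux : ∀ a b : ℝ, 0 < a → a ≤ b →
    (a+1)*Real.log a - 2*(a-1) ≤ (b+1)*Real.log b - 2*(b-1) := by
  intro a b ha hab
  have hder : ∀ x : ℝ, 0 < x → HasDerivAt (fun t => (t+1)*Real.log t - 2*(t-1))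
      (Real.log x + (x+1)/x - 2) x := by
    intro x hx
    have h1 : HasDerivAt (fun t : ℝ => (t+1)*Real.log t)
        (1 * Real.log x + (x+1) * x⁻¹) x :=
      (((hasDerivAt_id x).add_const 1)).mul (Real.hasDerivAt_log (ne_of_gt hx))
    have h2 : HasDerivAt (fun t : ℝ => 2*(t-1)) (2*1) x :=
      ((hasDerivAt_id x).sub_const 1).const_mul 2
    have := h1.sub h2
    exact this.congr_deriv (by field_simp)
  have hmono := monotoneOn_of_deriv_nonneg (convex_Icc a b)
    (fun x hx => ((hder x (lt_of_lt_of_le ha hx.1)).continuousAt).continuousWithinAt)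
    (fun x hx => by
      rw [interior_Icc] at hx
      exact ((hder x (ha.trans hx.1)).differentiableAt).differentiableWithinAt)
    (fun x hx => by
      rw [interior_Icc] at hx
      have hx0 : 0 < x := ha.trans hx.1
      rw [(hder x hx0).deriv]
      have hlog : 1 - 1/x ≤ Real.log x := by
        have h := Real.log_le_sub_one_of_pos (x := 1/x) (by positivity)
        rw [one_div, Real.log_inv] at h
        simp only [one_div]; linarith
      have : (x+1)/x = 1 + 1/x := by field_simp
      rw [this]; linarith)
  exact hmono (Set.left_mem_Icc.2 hab) (Set.right_mem_Icc.2 hab) hab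

lemma keyt (t : ℝ) (ht : 0 < t) : 3*(t-1)^2 ≤ (2*t+4)*(t*Real.log t - t + 1) := by
  have hgder : ∀ x : ℝ, 0 < x → HasDerivAt (fun t => (2*t+4)*(t*Real.log t - t + 1) - 3*(t-1)^2)
      (4*((x+1)*Real.log x - 2*(x-1))) x := by
    intro x hx
    have hu : HasDerivAt (fun t : ℝ => 2*t+4) 2 x := by
      simpa using ((hasDerivAt_id x).const_mul (2:ℝ)).add_const 4
    have hv : HasDerivAt (fun t : ℝ => t*Real.log t - t + 1) ((Real.log x + 1) - 1) x :=
      ((Real.hasDerivAt_mul_log (ne_of_gt hx)).sub (hasDerivAt_id x)).add_const 1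
    have hsq : HasDerivAt (fun t : ℝ => 3*(t-1)^2) (3*(2*(x-1))) x := by
      have := (((hasDerivAt_id x).sub_const 1).pow 2)
      simpa using this.const_mul (3:ℝ)
    have := (hu.mul hv).sub hsq
    exact this.congr_deriv (by ring)
  set g : ℝ → ℝ := fun t => (2*t+4)*(t*Real.log t - t + 1) - 3*(t-1)^2 with hg
  suffices h : 0 ≤ g t by simp only [hg] at h; linarith
  have hg1 : g 1 = 0 := by simp [hg]
  rcases le_total t 1 with h1 | h1
  · -- antitone on [t,1]
    have hanti := antitoneOn_of_deriv_nonpos (convex_Icc t 1)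
      (fun x hx => ((hgder x (lt_of_lt_of_le ht hx.1)).continuousAt).continuousWithinAt)
      (fun x hx => by
        rw [interior_Icc] at hx
        exact ((hgder x (ht.trans hx.1)).differentiableAt).differentiableWithinAt)
      (fun x hx => by
        rw [interior_Icc] at hx
        have hx0 : 0 < x := ht.trans hx.1
        rw [(hgder x hx0).deriv]
        have := hmono_aux x 1 hx0 (le_of_lt hx.2)
        simp only [Real.log_one] at this
        nlinarith)
    have := hanti (Set.left_mem_Icc.2 h1) (Set.right_mem_Icc.2 h1) h1
    rw [hg1] at this; exact this
  · have hmon := monotoneOn_of_deriv_nonneg (convex_Icc 1 t)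
      (fun x hx => ((hgder x (lt_of_lt_of_le one_pos hx.1)).continuousAt).continuousWithinAt)
      (fun x hx => by
        rw [interior_Icc] at hx
        exact ((hgder x (one_pos.trans hx.1)).differentiableAt).differentiableWithinAt)
      (fun x hx => by
        rw [interior_Icc] at hx
        have hx0 : (0:ℝ) < x := one_pos.trans hx.1
        rw [(hgder x hx0).deriv]
        have := hmono_aux 1 x one_pos (le_of_lt hx.1)
        simp only [Real.log_one] at this
        nlinarith)
    have := hmon (Set.left_mem_Icc.2 h1) (Set.right_mem_Icc.2 h1) h1
    rw [hg1] at this; exact this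


lemma key {x y : ℝ} (hx : 0 ≤ x) (hy : 0 ≤ y) (hxy : x ≠ 0 → 0 < y) :
    3*(x-y)^2 ≤ (2*x+4*y) * (x * Real.log (x/y) - x + y) := by
  rcases eq_or_lt_of_le hx with h0 | h0
  · rw [← h0]; nlinarith
  · have hy0 : 0 < y := hxy (ne_of_gt h0)
    have ht : 0 < x / y := div_pos h0 hy0
    have hk := keyt (x/y) ht
    have hxe : (x/y) * y = x := div_mul_cancel₀ x (ne_of_gt hy0)
    set L := Real.log (x/y) with hL
    calc 3*(x-y)^2 = y^2 * (3*((x/y)-1)^2) := by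
          field_simp
      _ ≤ y^2 * ((2*(x/y)+4)*((x/y)*L - (x/y) + 1)) := by
          apply mul_le_mul_of_nonneg_left hk (sq_nonneg y)
      _ = (2*x+4*y) * (x * L - x + y) := by
          field_simp

lemma klterm_nonneg {x y : ℝ} (hx : 0 ≤ x) (hy : 0 ≤ y) (hxy : x ≠ 0 → 0 < y) :
    0 ≤ x * Real.log (x/y) - x + y := by
  rcases eq_or_lt_of_le hx with h0 | h0
  · rw [← h0]; simpa using hy
  · have hy0 : 0 < y := hxy (ne_of_gt h0)
    have hk := key hx hy hxy
    nlinarith [sq_nonneg (x-y)]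

lemma pm_abs (a : Bool) : |pm a| = 1 := by cases a <;> simp [pm]


lemma covBound (P : Bool → Bool → ℝ) (hP : ∀ a b, 0 ≤ P a b) :
    (∑ a, ∑ b, P a b) *
      ((∑ a, ∑ b, pm a * pm b * (P a b / (∑ a, ∑ b, P a b)))
        - (∑ a, pm a * ((∑ b, P a b) / (∑ a, ∑ b, P a b)))
          * (∑ b, pm b * ((∑ a, P a b) / (∑ a, ∑ b, P a b))))
    ≤ ∑ a, ∑ b, |P a b - (∑ b', P a b') * (∑ a', P a' b) / (∑ a, ∑ b, P a b)| := by
  by_cases hT : (∑ a, ∑ b, P a b) = 0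
  · have hz : ∀ a b, P a b = 0 := by
      have h := hT
      simp only [Fintype.sum_bool] at h
      intro a b
      cases a <;> cases b <;>
        nlinarith [hP true true, hP true false, hP false true, hP false false]
    simp [hz, hT]
  · have heq : (∑ a, ∑ b, P a b) *
      ((∑ a, ∑ b, pm a * pm b * (P a b / (∑ a, ∑ b, P a b)))
        - (∑ a, pm a * ((∑ b, P a b) / (∑ a, ∑ b, P a b)))
          * (∑ b, pm b * ((∑ a, P a b) / (∑ a, ∑ b, P a b))))
      = ∑ a, ∑ b, pm a * pm b *
          (P a b - (∑ b', P a b') * (∑ a', P a' b) / (∑ a, ∑ b, P a b)) := by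
      simp only [Fintype.sum_bool] at hT ⊢
      simp only [pm]
      norm_num
      field_simp
      ring
    rw [heq]
    apply Finset.sum_le_sum
    intro a _
    apply Finset.sum_le_sum
    intro b _
    calc pm a * pm b * (P a b - (∑ b', P a b') * (∑ a', P a' b) / (∑ a, ∑ b, P a b))
        ≤ |pm a * pm b * (P a b - (∑ b', P a b') * (∑ a', P a' b) / (∑ a, ∑ b, P a b))| :=
          le_abs_self _
      _ = |P a b - (∑ b', P a b') * (∑ a', P a' b) / (∑ a, ∑ b, P a b)| := by
          rw [abs_mul, abs_mul, pm_abs, pm_abs, one_mul, one_mul]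

lemma ySum (P : Bool → Bool → ℝ) (hP : ∀ a b, 0 ≤ P a b) :
    ∑ a, ∑ b, (∑ b', P a b') * (∑ a', P a' b) / (∑ a, ∑ b, P a b) ≤ ∑ a, ∑ b, P a b := by
  by_cases hT : (∑ a, ∑ b, P a b) = 0
  · have hz : ∀ a b, P a b = 0 := by
      have h := hT
      simp only [Fintype.sum_bool] at h
      intro a b
      cases a <;> cases b <;>
        nlinarith [hP true true, hP true false, hP false true, hP false false]
    simp [hz]
  · apply le_of_eq
    simp only [Fintype.sum_bool] at hT ⊢
    field_simp
    ring

theorem aux (K : ℕ) (p : Bool → Bool → Fin K → ℝ)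
    (hp : ∀ a b s, 0 ≤ p a b s) (hsum : ∑ s, ∑ a, ∑ b, p a b s = 1) :
    (∑ s, (∑ a, ∑ b, p a b s) *
      ((∑ a, ∑ b, pm a * pm b * (p a b s / (∑ a, ∑ b, p a b s)))
        - (∑ a, pm a * ((∑ b, p a b s) / (∑ a, ∑ b, p a b s)))
          * (∑ b, pm b * ((∑ a, p a b s) / (∑ a, ∑ b, p a b s)))))
    ≤ Real.sqrt (2 * (∑ s, ∑ a, ∑ b, p a b s *
        Real.log (p a b s * (∑ a, ∑ b, p a b s) / ((∑ b', p a b' s) * (∑ a', p a' b s))))) := by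
  classical
  set q : Fin K × Bool × Bool → ℝ := fun z => p z.2.1 z.2.2 z.1 with hq
  set r : Fin K × Bool × Bool → ℝ := fun z =>
    (∑ b', p z.2.1 b' z.1) * (∑ a', p a' z.2.2 z.1) / (∑ a, ∑ b, p a b z.1) with hr
  set W : Fin K × Bool × Bool → ℝ := fun z => q z * Real.log (q z / r z) - q z + r z with hW
  set I : ℝ := ∑ s, ∑ a, ∑ b, p a b s *
      Real.log (p a b s * (∑ a, ∑ b, p a b s) / ((∑ b', p a b' s) * (∑ a', p a' b s))) with hI
  have hflat : ∀ F : Fin K × Bool × Bool → ℝ, ∑ z, F z = ∑ s, ∑ a, ∑ b, F (s, a, b) := by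
    intro F
    simp only [Fintype.sum_prod_type]
  have hq0 : ∀ z, 0 ≤ q z := fun z => hp _ _ _
  have hr0 : ∀ z, 0 ≤ r z := fun z =>
    div_nonneg (mul_nonneg (Finset.sum_nonneg fun b _ => hp _ _ _)
      (Finset.sum_nonneg fun a _ => hp _ _ _))
      (Finset.sum_nonneg fun a _ => Finset.sum_nonneg fun b _ => hp _ _ _)
  have hqr : ∀ z, q z ≠ 0 → 0 < r z := by
    intro z hz
    have hq' : 0 < q z := lt_of_le_of_ne (hq0 z) (Ne.symm hz)
    have hA : 0 < ∑ b', p z.2.1 b' z.1 :=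
      lt_of_lt_of_le hq' (Finset.single_le_sum (f := fun b' => p z.2.1 b' z.1) (fun b _ => hp _ _ _) (Finset.mem_univ z.2.2))
    have hB : 0 < ∑ a', p a' z.2.2 z.1 :=
      lt_of_lt_of_le hq' (Finset.single_le_sum (f := fun a' => p a' z.2.2 z.1) (fun a _ => hp _ _ _) (Finset.mem_univ z.2.1))
    have hT : 0 < ∑ a, ∑ b, p a b z.1 :=
      lt_of_lt_of_le hA (Finset.single_le_sum
        (f := fun a => ∑ b, p a b z.1)
        (fun a _ => Finset.sum_nonneg fun b _ => hp _ _ _) (Finset.mem_univ z.2.1))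
    exact div_pos (mul_pos hA hB) hT
  have hqsum : ∑ z, q z = 1 := by rw [hflat]; exact hsum
  have hrsum : ∑ z, r z ≤ 1 := by
    rw [hflat]
    calc ∑ s, ∑ a, ∑ b, r (s, a, b) ≤ ∑ s, ∑ a, ∑ b, p a b s :=
          Finset.sum_le_sum fun s _ => ySum (fun a b => p a b s) (fun a b => hp a b s)
      _ = 1 := hsum
  have hlogeq : ∑ z, q z * Real.log (q z / r z) = I := by
    rw [hflat, hI]
    refine Finset.sum_congr rfl fun s _ => Finset.sum_congr rfl fun a _ =>
      Finset.sum_congr rfl fun b _ => ?_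
    have : q (s, a, b) / r (s, a, b)
        = p a b s * (∑ a, ∑ b, p a b s) / ((∑ b', p a b' s) * (∑ a', p a' b s)) := by
      rw [hq, hr]
      exact div_div_eq_mul_div _ _ _
    rw [this]
  have hWsum : ∑ z, W z ≤ I := by
    have : ∑ z, W z = (∑ z, q z * Real.log (q z / r z)) - (∑ z, q z) + (∑ z, r z) := by
      rw [hW]
      rw [Finset.sum_add_distrib, Finset.sum_sub_distrib]
    rw [this, hlogeq, hqsum]
    linarith
  have hWnn : ∀ z, 0 ≤ W z := fun z => klterm_nonneg (hq0 z) (hr0 z) (hqr z)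
  have hWsnn : 0 ≤ ∑ z, W z := Finset.sum_nonneg fun z _ => hWnn z
  have hInn : 0 ≤ I := le_trans hWsnn hWsum
  set Sv : ℝ := ∑ z, |q z - r z| with hSv
  have hSvnn : 0 ≤ Sv := Finset.sum_nonneg fun z _ => abs_nonneg _
  have cs := Finset.sum_mul_sq_le_sq_mul_sq Finset.univ
    (fun z => Real.sqrt (2*q z + 4*r z)) (fun z => Real.sqrt (W z))
  have hterm : ∀ z, Real.sqrt 3 * |q z - r z|
      ≤ Real.sqrt (2*q z + 4*r z) * Real.sqrt (W z) := by
    intro z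
    have h1 : Real.sqrt (3*(q z - r z)^2) ≤ Real.sqrt ((2*q z + 4*r z) * W z) :=
      Real.sqrt_le_sqrt (key (hq0 z) (hr0 z) (hqr z))
    have h24 : 0 ≤ 2*q z + 4*r z := by linarith [hq0 z, hr0 z]
    rwa [Real.sqrt_mul (by norm_num : (0:ℝ) ≤ 3), Real.sqrt_sq_eq_abs,
      Real.sqrt_mul h24] at h1
  have hSb : Real.sqrt 3 * Sv ≤ ∑ z, Real.sqrt (2*q z + 4*r z) * Real.sqrt (W z) := by
    rw [hSv, Finset.mul_sum]
    exact Finset.sum_le_sum fun z _ => hterm z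
  have hsq1 : ∑ z, (Real.sqrt (2*q z + 4*r z))^2 = ∑ z, (2*q z + 4*r z) :=
    Finset.sum_congr rfl fun z _ => Real.sq_sqrt (by linarith [hq0 z, hr0 z])
  have hsq2 : ∑ z, (Real.sqrt (W z))^2 = ∑ z, W z :=
    Finset.sum_congr rfl fun z _ => Real.sq_sqrt (hWnn z)
  have hsum24 : ∑ z, (2*q z + 4*r z) ≤ 6 := by
    rw [Finset.sum_add_distrib, ← Finset.mul_sum, ← Finset.mul_sum, hqsum]
    linarith
  have hsum24nn : 0 ≤ ∑ z, (2*q z + 4*r z) :=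
    Finset.sum_nonneg fun z _ => by linarith [hq0 z, hr0 z]
  have h3 : 3 * Sv^2 ≤ 6 * I := by
    calc 3 * Sv^2 = (Real.sqrt 3 * Sv)^2 := by
          rw [mul_pow, Real.sq_sqrt (by norm_num : (0:ℝ) ≤ 3)]
      _ ≤ (∑ z, Real.sqrt (2*q z + 4*r z) * Real.sqrt (W z))^2 :=
          pow_le_pow_left₀ (mul_nonneg (Real.sqrt_nonneg 3) hSvnn) hSb 2
      _ ≤ (∑ z, (Real.sqrt (2*q z + 4*r z))^2) * (∑ z, (Real.sqrt (W z))^2) := cs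
      _ = (∑ z, (2*q z + 4*r z)) * (∑ z, W z) := by rw [hsq1, hsq2]
      _ ≤ 6 * I := mul_le_mul hsum24 hWsum hWsnn (by norm_num)
  have final1 : Sv ≤ Real.sqrt (2 * I) := Real.le_sqrt_of_sq_le (by linarith)
  have hL : (∑ s, (∑ a, ∑ b, p a b s) *
      ((∑ a, ∑ b, pm a * pm b * (p a b s / (∑ a, ∑ b, p a b s)))
        - (∑ a, pm a * ((∑ b, p a b s) / (∑ a, ∑ b, p a b s)))
          * (∑ b, pm b * ((∑ a, p a b s) / (∑ a, ∑ b, p a b s)))))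
      ≤ ∑ s, ∑ a, ∑ b, |q (s, a, b) - r (s, a, b)| :=
    Finset.sum_le_sum fun s _ => covBound (fun a b => p a b s) (fun a b => hp a b s)
  have htest : (∑ s, ∑ a, ∑ b, |q (s, a, b) - r (s, a, b)|) = Sv :=
    (hflat (fun z => |q z - r z|)).symm
  exact le_trans hL (htest ▸ final1)

theorem stmt8 (K : ℕ) (p : Bool → Bool → Fin K → ℝ)
    (hp : ∀ a b s, 0 ≤ p a b s) (hsum : ∑ s, ∑ a, ∑ b, p a b s = 1) :
    let ps : Fin K → ℝ := fun s => ∑ a, ∑ b, p a b s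
    let pa : Bool → Fin K → ℝ := fun a s => ∑ b, p a b s
    let pb : Bool → Fin K → ℝ := fun b s => ∑ a, p a b s
    let cov : Fin K → ℝ := fun s =>
      (∑ a, ∑ b, pm a * pm b * (p a b s / ps s))
        - (∑ a, pm a * (pa a s / ps s)) * (∑ b, pm b * (pb b s / ps s))
    let I : ℝ := ∑ s, ∑ a, ∑ b, p a b s * Real.log (p a b s * ps s / (pa a s * pb b s))
    (∑ s, ps s * cov s) ≤ Real.sqrt (2 * I) := by
  intro ps pa pb cov I
  exact aux K p hp hsum
end

section
/- Let ρ(a) = log(exp(a) + exp(−a)), let J ∈ ℝ^{n×1} with J ≥ 0 entrywise, g ∈ ℝ, and define f(x) = ρ(Σ_i J_i x_i + g) for x ∈ {±1}^n. Then for any distinct i, j, the Fourier coefficient f̂_{{i,j}} = 2^{−n} Σ_{x ∈ {±1}^n} f(x)·x_i·x_j is nonnegative, and it is strictly positive whenever J_i > 0 and J_j > 0. -/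
/-!
Flipping the coordinates `i` and `j` of `x` moves the linear form `t = ∑ J_k x_k + g` to
`t ± J_i ± J_j`, so pairing each `x` with its three flips rewrites `4 f̂_{ij}` as a sum of
second mixed differences `ρ(t + (a + b)) + ρ(t - (a + b)) - ρ(t + (a - b)) - ρ(t - (a - b))`
with `a = J_i`, `b = J_j`. Since `(eᵘ + e⁻ᵘ)(eᵛ + e⁻ᵛ) = 2 cosh (u + v) + 2 cosh (u - v)`,
the sum `ρ(t + s) + ρ(t - s) = log (2 cosh 2t + 2 cosh 2s)` is increasing in `|s|`,
and `|a - b| ≤ a + b`.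
-/

open Real Finset

lemma pm_true : pm true = 1 := rfl

lemma pm_false : pm false = -1 := rfl

lemma pm_not (b : Bool) : pm (!b) = -pm b := by cases b <;> simp [pm]

noncomputable def rho (a : ℝ) : ℝ := log (exp a + exp (-a))

lemma rho_add_rho_sub (t s : ℝ) :
    rho (t + s) + rho (t - s) = log (2 * cosh (2 * t) + 2 * cosh (2 * s)) := by
  unfold rho
  rw [← log_mul (by positivity) (by positivity), cosh_eq, cosh_eq]
  congr 1
  simp only [two_mul, neg_add_rev, neg_sub, exp_add, exp_sub, exp_neg]
  field_simp
  ring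

lemma rho_add_rho_sub_le (t : ℝ) {s s' : ℝ} (h : |s| ≤ |s'|) :
    rho (t + s) + rho (t - s) ≤ rho (t + s') + rho (t - s') := by
  rw [rho_add_rho_sub, rho_add_rho_sub]
  have : cosh (2 * s) ≤ cosh (2 * s') := cosh_le_cosh.2 (by simpa [abs_mul] using h)
  gcongr

lemma rho_add_rho_sub_lt (t : ℝ) {s s' : ℝ} (h : |s| < |s'|) :
    rho (t + s) + rho (t - s) < rho (t + s') + rho (t - s') := by
  rw [rho_add_rho_sub, rho_add_rho_sub]
  have : cosh (2 * s) < cosh (2 * s') := cosh_lt_cosh.2 (by simpa [abs_mul] using h)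
  gcongr

def mixedDiff (h : ℝ → ℝ) (t a b : ℝ) : ℝ :=
  h (t + (a + b)) + h (t - (a + b)) - h (t + (a - b)) - h (t - (a - b))

lemma mixedDiff_rho_nonneg (t : ℝ) {a b : ℝ} (ha : 0 ≤ a) (hb : 0 ≤ b) :
    0 ≤ mixedDiff rho t a b := by
  have : |a - b| ≤ |a + b| := by
    rw [abs_of_nonneg (add_nonneg ha hb)]; exact abs_sub_le_iff.2 ⟨by linarith, by linarith⟩
  unfold mixedDiff
  linarith [rho_add_rho_sub_le t this]

lemma mixedDiff_rho_pos (t : ℝ) {a b : ℝ} (ha : 0 < a) (hb : 0 < b) :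
    0 < mixedDiff rho t a b := by
  have : |a - b| < |a + b| := by
    rw [abs_of_pos (add_pos ha hb)]; exact abs_sub_lt_iff.2 ⟨by linarith, by linarith⟩
  unfold mixedDiff
  linarith [rho_add_rho_sub_lt t this]

lemma pm_mul_pm_mul_mixedDiff (h : ℝ → ℝ) (t a b : ℝ) (e d : Bool) :
    pm e * pm d * mixedDiff h t (pm e * a) (pm d * b) = mixedDiff h t a b := by
  cases e <;> cases d <;> simp only [pm_true, pm_false, mixedDiff] <;> ring_nf

section Flip

variable {n : ℕ}

def flipAt (i : Fin n) : Equiv.Perm (Fin n → Bool) :=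
  Function.Involutive.toPerm (fun x => Function.update x i (!x i)) fun x => by
    funext k; by_cases hk : k = i <;> simp [hk]

lemma flipAt_apply_self (i : Fin n) (x : Fin n → Bool) : flipAt i x i = !x i :=
  Function.update_self _ _ _

lemma flipAt_apply_of_ne {i k : Fin n} (h : k ≠ i) (x : Fin n → Bool) : flipAt i x k = x k :=
  Function.update_of_ne h _ _

lemma sum_mul_pm_flipAt (J : Fin n → ℝ) (i : Fin n) (x : Fin n → Bool) :
    ∑ k, J k * pm (flipAt i x k) = ∑ k, J k * pm (x k) - 2 * (J i * pm (x i)) := by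
  rw [← add_sum_erase _ _ (mem_univ i), ← add_sum_erase _ _ (mem_univ i),
    sum_congr rfl fun k hk => by rw [flipAt_apply_of_ne (ne_of_mem_erase hk)],
    flipAt_apply_self, pm_not]
  ring

lemma sum_mul_pm_mul_pm_eq (h : ℝ → ℝ) (J : Fin n → ℝ) (g : ℝ) {i j : Fin n}
    (hij : i ≠ j) :
    ∑ x : Fin n → Bool, h (∑ k, J k * pm (x k) + g) * pm (x i) * pm (x j) =
      4⁻¹ * ∑ x : Fin n → Bool,
        mixedDiff h (∑ k, J k * pm (x k) + g - J i * pm (x i) - J j * pm (x j)) (J i) (J j) := by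
  set F : (Fin n → Bool) → ℝ := fun x => h (∑ k, J k * pm (x k) + g) * pm (x i) * pm (x j)
  have orbit_sum (x : Fin n → Bool) :
      F x + F (flipAt i x) + F (flipAt j x) + F (flipAt i (flipAt j x)) =
        mixedDiff h (∑ k, J k * pm (x k) + g - J i * pm (x i) - J j * pm (x j)) (J i) (J j) := by
    simp only [F, sum_mul_pm_flipAt, flipAt_apply_self, flipAt_apply_of_ne hij,
      flipAt_apply_of_ne hij.symm, pm_not]
    rw [← pm_mul_pm_mul_mixedDiff h _ _ _ (x i) (x j)]
    unfold mixedDiff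
    ring_nf
  have sum_flipAt_i : ∑ x, F (flipAt i x) = ∑ x, F x := Equiv.sum_comp _ F
  have sum_flipAt_j : ∑ x, F (flipAt j x) = ∑ x, F x := Equiv.sum_comp _ F
  have sum_flipAt_ij : ∑ x, F (flipAt i (flipAt j x)) = ∑ x, F x :=
    Equiv.sum_comp ((flipAt j).trans (flipAt i)) F
  rw [← sum_congr rfl fun x _ => orbit_sum x]
  simp only [sum_add_distrib, sum_flipAt_i, sum_flipAt_j, sum_flipAt_ij]
  ring

end Flip

theorem stmt12 (n : ℕ) (J : Fin n → ℝ) (hJ : ∀ i, 0 ≤ J i) (g : ℝ)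
    (i j : Fin n) (hij : i ≠ j) :
    let ρ : ℝ → ℝ := fun a => Real.log (Real.exp a + Real.exp (-a))
    let c : ℝ := ((2 : ℝ) ^ n)⁻¹ *
      ∑ x : Fin n → Bool, ρ ((∑ i', J i' * pm (x i')) + g) * pm (x i) * pm (x j)
    0 ≤ c ∧ (0 < J i → 0 < J j → 0 < c) := by
  intro ρ c
  show 0 ≤ _ * ∑ x : Fin n → Bool, rho _ * _ * _ ∧
    (_ → _ → 0 < _ * ∑ x : Fin n → Bool, rho _ * _ * _)
  rw [sum_mul_pm_mul_pm_eq rho J g hij]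
  have hscale : (0 : ℝ) < ((2 : ℝ) ^ n)⁻¹ * 4⁻¹ := by positivity
  rw [← mul_assoc]
  exact ⟨mul_nonneg hscale.le (sum_nonneg fun _ _ => mixedDiff_rho_nonneg _ (hJ i) (hJ j)),
    fun hi hj => mul_pos hscale (sum_pos (fun _ _ => mixedDiff_rho_pos _ hi hj) univ_nonempty)⟩
end
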